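/- arXiv:math/0510128 — 3 statements merged into one kernel-verified Lean document; each statement's English description precedes it below -/
import Mathlib

section
/- Let P = {x ∈ ℚ^n : Ax ≥ b} be a polyhedron and π : ℚ^n → ℚ^d the projection onto the last d coordinates, with Q = π(P). For q ∈ Q let P_q = π_{n-d}(π^{-1}(q) ∩ P) be the fiber polyhedron, where π_{n-d} is projection onto the first n-d coordinates. Then there are only finitely many normal equivalence classes among the polyhedra P_q for q ∈ Q. -/
open Finset Set Pointwise

noncomputable section

variable {ι : Type*}

/-- The standard pairing between `ι → ℚ` and itself (functionals as vectors). -/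
def dotp [Fintype ι] (w x : ι → ℚ) : ℚ := ∑ i, w i * x i

/-- The face of `P` on which the linear functional `w` attains its minimum. -/
def faceOf [Fintype ι] (P : Set (ι → ℚ)) (w : ι → ℚ) : Set (ι → ℚ) :=
  {x | x ∈ P ∧ ∀ y ∈ P, dotp w x ≤ dotp w y}

/-- `F` is a (nonempty) face of `P`. -/
def IsFaceOf [Fintype ι] (P F : Set (ι → ℚ)) : Prop :=
  F.Nonempty ∧ ∃ w, F = faceOf P w

/-- The (closed) inner normal cone of a face `F` of `P`: all functionals minimized on `F`. -/
def normalCone [Fintype ι] (P F : Set (ι → ℚ)) : Set (ι → ℚ) :=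
  {w | F ⊆ faceOf P w}

/-- The recession cone of `P`. -/
def recCone (P : Set (ι → ℚ)) : Set (ι → ℚ) := {u | ∀ x ∈ P, x + u ∈ P}

/-- The dual cone of `C`. -/
def dualCone [Fintype ι] (C : Set (ι → ℚ)) : Set (ι → ℚ) := {w | ∀ x ∈ C, 0 ≤ dotp w x}

/-- The relative interior of a convex set `S`. -/
def relint (S : Set (ι → ℚ)) : Set (ι → ℚ) :=
  {x | x ∈ S ∧ ∀ y ∈ S, ∃ ε : ℚ, 0 < ε ∧ x + ε • (x - y) ∈ S}

/-- `P` is a polyhedron `{x | A x ≥ b}`. -/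
def IsPolyhedron [Fintype ι] (P : Set (ι → ℚ)) : Prop :=
  ∃ (r : ℕ) (A : Fin r → ι → ℚ) (b : Fin r → ℚ), P = {x | ∀ i, b i ≤ dotp (A i) x}

/-- `C` is a polyhedral cone `{x | A x ≥ 0}`. -/
def IsPolyhedralCone [Fintype ι] (C : Set (ι → ℚ)) : Prop :=
  ∃ (r : ℕ) (A : Fin r → ι → ℚ), C = {x | ∀ i, 0 ≤ dotp (A i) x}

/-- Two polyhedra are normally equivalent: they have the same inner normal fan,
i.e. the same support and the same partition of functionals by faces. -/
def normallyEquiv [Fintype ι] (P P' : Set (ι → ℚ)) : Prop :=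
  (∀ w, (faceOf P w).Nonempty ↔ (faceOf P' w).Nonempty) ∧
  ∀ w w', faceOf P w = faceOf P w' ↔ faceOf P' w = faceOf P' w'

/-- `F` is the smallest face of `P` containing the set `S`. -/
def IsSmallestFaceContaining [Fintype ι] (P S F : Set (ι → ℚ)) : Prop :=
  IsFaceOf P F ∧ S ⊆ F ∧ ∀ G, IsFaceOf P G → S ⊆ G → F ⊆ G

/-- The homogenization `P̃` of `P`: the closure in `(ι ⊕ Unit) → ℚ` of the cone over `P`
placed at height `1`. -/
def tildeSet (P : Set (ι → ℚ)) : Set ((ι ⊕ Unit) → ℚ) :=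
  closure {p | ∃ x ∈ P, ∃ l : ℚ, 0 < l ∧ p = Sum.elim (l • x) (fun _ => l)}

/-! ### Auxiliary machinery -/

section Aux

variable {m r : ℕ}

/-- The polyhedron `{x | M x ≥ c}`. -/
def Pset (M : Fin r → Fin m → ℚ) (c : Fin r → ℚ) : Set (Fin m → ℚ) :=
  {x | ∀ i, c i ≤ dotp (M i) x}

/-- `w` is nonnegative on the cone `{z | M_i z ≥ 0, i ∈ I}`. -/
def DI (M : Fin r → Fin m → ℚ) (I : Set (Fin r)) (w : Fin m → ℚ) : Prop :=
  ∀ z : Fin m → ℚ, (∀ i ∈ I, 0 ≤ dotp (M i) z) → 0 ≤ dotp w z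

/-- The collection of realizable exact tight index sets of points of `Pset M c`. -/
def Tset (M : Fin r → Fin m → ℚ) (c : Fin r → ℚ) : Set (Set (Fin r)) :=
  {I | ∃ x ∈ Pset M c, ∀ i, dotp (M i) x = c i ↔ i ∈ I}

lemma dotp_sub {n : ℕ} (w x y : Fin n → ℚ) : dotp w (x - y) = dotp w x - dotp w y := by
  simp [dotp, mul_sub, Finset.sum_sub_distrib]

lemma dotp_add_smul {n : ℕ} (w x z : Fin n → ℚ) (ε : ℚ) :
    dotp w (x + ε • z) = dotp w x + ε * dotp w z := by
  simp [dotp, smul_eq_mul, mul_add, Finset.sum_add_distrib, Finset.mul_sum, mul_left_comm]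

lemma exists_eps (M : Fin r → Fin m → ℚ) (c : Fin r → ℚ) (x z : Fin m → ℚ)
    (hx : x ∈ Pset M c) (hz : ∀ i, dotp (M i) x = c i → 0 ≤ dotp (M i) z) :
    ∃ ε : ℚ, 0 < ε ∧ x + ε • z ∈ Pset M c := by
  classical
  set s : Finset (Fin r) := Finset.univ.filter (fun i => dotp (M i) z < 0) with hs
  have hmem : ∀ i ∈ s, dotp (M i) z < 0 := fun i hi => (Finset.mem_filter.mp hi).2
  have hstrict : ∀ i ∈ s, 0 < dotp (M i) x - c i := by
    intro i hi
    rcases lt_or_eq_of_le (hx i) with h | h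
    · linarith
    · exact absurd (hz i h.symm) (not_le.mpr (hmem i hi))
  by_cases hne : s.Nonempty
  · set f : Fin r → ℚ := fun i => (dotp (M i) x - c i) / (-(dotp (M i) z)) with hf
    refine ⟨min 1 (s.inf' hne f), ?_, ?_⟩
    · refine lt_min one_pos ?_
      rw [Finset.lt_inf'_iff]
      intro i hi
      exact div_pos (hstrict i hi) (by linarith [hmem i hi])
    · intro i
      rw [dotp_add_smul]
      have hε : 0 < min 1 (s.inf' hne f) := by
        refine lt_min one_pos ?_
        rw [Finset.lt_inf'_iff]
        intro i hi
        exact div_pos (hstrict i hi) (by linarith [hmem i hi])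
      by_cases hzi : 0 ≤ dotp (M i) z
      · nlinarith [hx i]
      · have his : i ∈ s := Finset.mem_filter.mpr ⟨Finset.mem_univ i, not_le.mp hzi⟩
        have h1 : min 1 (s.inf' hne f) ≤ f i :=
          le_trans (min_le_right _ _) (Finset.inf'_le f his)
        have h2 : 0 < -(dotp (M i) z) := by linarith [hmem i his]
        have h1' : min 1 (s.inf' hne f) ≤ (dotp (M i) x - c i) / (-(dotp (M i) z)) := h1
        rw [le_div_iff₀ h2] at h1'
        nlinarith
  · refine ⟨1, one_pos, ?_⟩
    intro i
    rw [dotp_add_smul]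
    have hzi : 0 ≤ dotp (M i) z := by
      by_contra h
      exact hne ⟨i, Finset.mem_filter.mpr ⟨Finset.mem_univ i, not_le.mp h⟩⟩
    have := hx i
    linarith

lemma mem_faceOf_iff (M : Fin r → Fin m → ℚ) (c : Fin r → ℚ) (w x : Fin m → ℚ) :
    x ∈ faceOf (Pset M c) w ↔
      x ∈ Pset M c ∧ DI M {i | dotp (M i) x = c i} w := by
  constructor
  · rintro ⟨hxP, hopt⟩
    refine ⟨hxP, fun z hz => ?_⟩
    obtain ⟨ε, hε, hmeme⟩ := exists_eps M c x z hxP (fun i hi => hz i hi)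
    have h := hopt _ hmeme
    rw [dotp_add_smul] at h
    nlinarith
  · rintro ⟨hxP, hD⟩
    refine ⟨hxP, fun y hy => ?_⟩
    have h0 : 0 ≤ dotp w (y - x) := by
      refine hD (y - x) ?_
      intro i hi
      have h1 := hy i
      have h2 : dotp (M i) x = c i := hi
      rw [dotp_sub]
      linarith
    rw [dotp_sub] at h0
    linarith

lemma faceOf_nonempty_iff (M : Fin r → Fin m → ℚ) (c : Fin r → ℚ) (w : Fin m → ℚ) :
    (faceOf (Pset M c) w).Nonempty ↔ ∃ I ∈ Tset M c, DI M I w := by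
  constructor
  · rintro ⟨x, hx⟩
    rw [mem_faceOf_iff] at hx
    exact ⟨{i | dotp (M i) x = c i}, ⟨x, hx.1, fun i => Iff.rfl⟩, hx.2⟩
  · rintro ⟨I, ⟨x, hxP, hxI⟩, hw⟩
    have hIx : {i | dotp (M i) x = c i} = I := Set.ext fun i => hxI i
    exact ⟨x, (mem_faceOf_iff M c w x).mpr ⟨hxP, by rw [hIx]; exact hw⟩⟩

lemma faceOf_eq_iff (M : Fin r → Fin m → ℚ) (c : Fin r → ℚ) (w w' : Fin m → ℚ) :
    faceOf (Pset M c) w = faceOf (Pset M c) w' ↔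
      ∀ I ∈ Tset M c, (DI M I w ↔ DI M I w') := by
  constructor
  · intro h I hI
    obtain ⟨x, hxP, hxI⟩ := hI
    have hIx : {i | dotp (M i) x = c i} = I := Set.ext fun i => hxI i
    constructor
    · intro hw
      have hx : x ∈ faceOf (Pset M c) w :=
        (mem_faceOf_iff M c w x).mpr ⟨hxP, by rw [hIx]; exact hw⟩
      rw [h] at hx
      have := ((mem_faceOf_iff M c w' x).mp hx).2
      rwa [hIx] at this
    · intro hw
      have hx : x ∈ faceOf (Pset M c) w' :=
        (mem_faceOf_iff M c w' x).mpr ⟨hxP, by rw [hIx]; exact hw⟩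
      rw [← h] at hx
      have := ((mem_faceOf_iff M c w x).mp hx).2
      rwa [hIx] at this
  · intro h
    ext x
    rw [mem_faceOf_iff, mem_faceOf_iff]
    constructor
    · rintro ⟨hxP, hD⟩
      exact ⟨hxP, (h _ ⟨x, hxP, fun i => Iff.rfl⟩).mp hD⟩
    · rintro ⟨hxP, hD⟩
      exact ⟨hxP, (h _ ⟨x, hxP, fun i => Iff.rfl⟩).mpr hD⟩

lemma normallyEquiv_of_Tset_eq (M : Fin r → Fin m → ℚ) (c c' : Fin r → ℚ)
    (h : Tset M c = Tset M c') : normallyEquiv (Pset M c) (Pset M c') := by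
  constructor
  · intro w
    rw [faceOf_nonempty_iff, faceOf_nonempty_iff, h]
  · intro w w'
    rw [faceOf_eq_iff, faceOf_eq_iff, h]

lemma dotp_elim {α β : Type*} [Fintype α] [Fintype β] (w : (α ⊕ β) → ℚ)
    (x : α → ℚ) (q : β → ℚ) :
    dotp w (Sum.elim x q) = dotp (w ∘ Sum.inl) x + dotp (w ∘ Sum.inr) q := by
  simp [dotp, Fintype.sum_sum_type]

end Aux

/-- finitely many normal equivalence classes among the fibers `P_q`. -/
theorem finitely_many_fiber_classes (m d r : ℕ) (A : Fin r → (Fin m ⊕ Fin d) → ℚ)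
    (b : Fin r → ℚ) (P : Set ((Fin m ⊕ Fin d) → ℚ))
    (hP : P = {x | ∀ i, b i ≤ dotp (A i) x}) :
    ∃ S : Set (Set (Fin m → ℚ)), S.Finite ∧
      ∀ q ∈ (fun x : (Fin m ⊕ Fin d) → ℚ => x ∘ Sum.inr) '' P,
        ∃ R ∈ S, normallyEquiv {x' : Fin m → ℚ | Sum.elim x' q ∈ P} R := by
  classical
  set M : Fin r → Fin m → ℚ := fun i => A i ∘ Sum.inl with hM
  set c : (Fin d → ℚ) → Fin r → ℚ := fun q i => b i - dotp (A i ∘ Sum.inr) q with hc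
  have hfiber : ∀ q : Fin d → ℚ, {x' : Fin m → ℚ | Sum.elim x' q ∈ P} = Pset M (c q) := by
    intro q
    ext x'
    simp only [hP, Pset, Set.mem_setOf_eq]
    refine forall_congr' fun i => ?_
    rw [dotp_elim]
    have : M i = A i ∘ Sum.inl := rfl
    rw [this]
    constructor <;> intro h <;> simp only [hc] at * <;> linarith
  set f : Set (Set (Fin r)) → Set (Fin m → ℚ) := fun 𝒮 =>
    if h : ∃ c0 : Fin r → ℚ, Tset M c0 = 𝒮 then Pset M h.choose else ∅ with hf
  refine ⟨Set.range f, Set.finite_range f, ?_⟩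
  intro q _
  refine ⟨f (Tset M (c q)), Set.mem_range_self _, ?_⟩
  rw [hfiber q]
  have hex : ∃ c0 : Fin r → ℚ, Tset M c0 = Tset M (c q) := ⟨c q, rfl⟩
  have hfeq : f (Tset M (c q)) = Pset M hex.choose := dif_pos hex
  rw [hfeq]
  exact normallyEquiv_of_Tset_eq M (c q) hex.choose hex.choose_spec.symm
end
end

section
/- Let C ⊆ ℚ^n be a full-dimensional polyhedral cone, π : ℚ^n → ℚ^d the projection onto the last d coordinates, and F a face of C. If v ∈ π(relint(F)), then π^∨(N_C(F)) = N_{C_v}(F_v), where C_v = π_{n-d}(π^{-1}(v) ∩ C), F_v = π_{n-d}(π^{-1}(v) ∩ F), and π^∨ : (ℚ^n)* → (ℚ^{n-d})* is the projection onto the first n-d coordinates (dual to the inclusion of ker(π)). -/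
/-!
`⊆` is immediate: on the slice over `v` a functional `w` differs from `w ∘ inl` by the
constant `⟨w ∘ inr, v⟩`. For `⊇`, write `C = {x | ∀ i, 0 ≤ ⟨Aᵢ, x⟩}` and pick `x₀ ∈ relint F`
over `v`. A functional `w'` minimized over `C_v` at `x₀ ∘ inl` is nonnegative on every direction
along which the constraints active at `x₀` stay satisfied, so Farkas' lemma writes
`w' = ∑ cᵢ (Aᵢ ∘ inl)` with `cᵢ ≥ 0` over the active constraints. The lift `∑ cᵢ Aᵢ` is
nonnegative on `C` and vanishes on `F`, since a constraint vanishing at a relative interior point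
of `F` vanishes on all of `F`.
-/

open Finset Set Pointwise

noncomputable section

variable {ι : Type*}

open Matrix Filter Topology

theorem Finset.sum_insert_update_smul {ι R M : Type*} [Semiring R] [AddCommMonoid M] [Module R M]
    [DecidableEq ι] {s : Finset ι} {j : ι} (hj : j ∉ s) (c : ι → R) (t : R) (a : ι → M) :
    ∑ i ∈ insert j s, Function.update c j t i • a i = t • a j + ∑ i ∈ s, c i • a i := by
  rw [sum_insert hj, Function.update_self]
  congr 1
  exact sum_congr rfl fun i hi => by rw [Function.update_of_ne (ne_of_mem_of_not_mem hi hj)]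

theorem exists_nonneg_sum_smul_eq_of_forall_dotProduct_nonneg {𝕜 ι κ : Type*} [Field 𝕜]
    [LinearOrder 𝕜] [IsStrictOrderedRing 𝕜] [Fintype κ] (s : Finset ι) (a : ι → κ → 𝕜)
    (b : κ → 𝕜) (h : ∀ z, (∀ i ∈ s, 0 ≤ a i ⬝ᵥ z) → 0 ≤ b ⬝ᵥ z) :
    ∃ c : ι → 𝕜, (∀ i ∈ s, 0 ≤ c i) ∧ b = ∑ i ∈ s, c i • a i := by
  classical
  induction s using Finset.induction_on generalizing a b with
  | empty =>
    have hbb : b ⬝ᵥ b ≤ 0 := by simpa [dotProduct_neg] using h (-b) (by simp)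
    refine ⟨0, by simp, ?_⟩
    simpa using dotProduct_self_eq_zero.1
      (hbb.antisymm (Fintype.sum_nonneg fun i => mul_self_nonneg (b i)))
  | insert j s hj ih =>
    by_cases hs : ∀ z, (∀ i ∈ s, 0 ≤ a i ⬝ᵥ z) → 0 ≤ b ⬝ᵥ z
    · obtain ⟨c, hc, rfl⟩ := ih a b hs
      refine ⟨Function.update c j 0, fun i hi => ?_,
        by rw [sum_insert_update_smul hj, zero_smul, zero_add]⟩
      rcases eq_or_ne i j with rfl | hij
      · simp
      · simpa [hij] using hc i ((mem_insert.1 hi).resolve_left hij)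
    push Not at hs
    obtain ⟨z, hz, hbz⟩ := hs
    have hjz : a j ⬝ᵥ z < 0 := by
      by_contra! hjz
      exact hbz.not_ge (h z (forall_mem_insert _ _ _ |>.2 ⟨hjz, hz⟩))
    -- Project along `a j` onto `z⊥`; the adjoint projection along `z` onto `(a j)⊥` keeps
    -- the constraint `a j` tight, so the hypothesis for `insert j s` descends to `s`.
    let red : (κ → 𝕜) →ₗ[𝕜] κ → 𝕜 :=
      LinearMap.id - ((a j ⬝ᵥ z)⁻¹ • dotProductBilin 𝕜 𝕜 z).smulRight (a j)
    have hred : ∀ x, red x = x - (x ⬝ᵥ z / a j ⬝ᵥ z) • a j := fun x => by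
      simp [red, div_eq_inv_mul, dotProduct_comm z x]
    have hadj : ∀ x y, red x ⬝ᵥ y = x ⬝ᵥ (y - (a j ⬝ᵥ y / a j ⬝ᵥ z) • z) := fun x y => by
      simp only [hred, sub_dotProduct, dotProduct_sub, smul_dotProduct, dotProduct_smul,
        smul_eq_mul, dotProduct_comm x z]
      field_simp
    obtain ⟨μ, hμ, hμb⟩ := ih (red ∘ a) (red b) fun y hy => by
      rw [hadj]
      refine h _ (forall_mem_insert _ _ _ |>.2 ⟨?_, fun i hi => ?_⟩)
      · rw [dotProduct_sub, dotProduct_smul, smul_eq_mul, div_mul_cancel₀ _ hjz.ne, sub_self]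
      · rw [← hadj]; exact hy i hi
    set u := b - ∑ i ∈ s, μ i • a i
    have hu : red u = 0 := by
      simp only [u, map_sub, map_sum, map_smul, hμb, Function.comp_apply, sub_self]
    have huz : u ⬝ᵥ z ≤ 0 := by
      rw [sub_dotProduct, sum_dotProduct, sub_nonpos]
      exact hbz.le.trans (sum_nonneg fun i hi => by
        rw [smul_dotProduct, smul_eq_mul]; exact mul_nonneg (hμ i hi) (hz i hi))
    refine ⟨Function.update μ j (u ⬝ᵥ z / a j ⬝ᵥ z), fun i hi => ?_, ?_⟩
    · rcases eq_or_ne i j with rfl | hij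
      · simpa using div_nonneg_of_nonpos huz hjz.le
      · simpa [hij] using hμ i ((mem_insert.1 hi).resolve_left hij)
    · have hu' : u = (u ⬝ᵥ z / a j ⬝ᵥ z) • a j := sub_eq_zero.1 (hred u ▸ hu)
      rw [sum_insert_update_smul hj, ← hu', sub_add_cancel]

section Polyhedra

variable {ι κ τ : Type*} [Fintype κ]

theorem dotp_eq_dotProduct (w x : κ → ℚ) : dotp w x = w ⬝ᵥ x := rfl

theorem dotp_sum_elim [Fintype τ] (w : κ ⊕ τ → ℚ) (x : κ → ℚ) (y : τ → ℚ) :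
    dotp w (Sum.elim x y) = dotp (w ∘ Sum.inl) x + dotp (w ∘ Sum.inr) y := by
  simp [dotp, Fintype.sum_sum_type]

theorem dotp_eq_dotp_comp_inl_add [Fintype τ] (w x : κ ⊕ τ → ℚ) :
    dotp w x = dotp (w ∘ Sum.inl) (x ∘ Sum.inl) + dotp (w ∘ Sum.inr) (x ∘ Sum.inr) := by
  rw [← dotp_sum_elim, Sum.elim_comp_inl_inr]

theorem dotp_eq_zero_of_mem_relint {S : Set (κ → ℚ)} {ℓ x₀ x : κ → ℚ}
    (hS : ∀ y ∈ S, 0 ≤ dotp ℓ y) (hx₀ : x₀ ∈ relint S) (h₀ : dotp ℓ x₀ = 0) (hx : x ∈ S) :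
    dotp ℓ x = 0 := by
  obtain ⟨ε, hε, hmem⟩ := hx₀.2 x hx
  have hle := hS _ hmem
  have hge := hS x hx
  simp only [dotp_eq_dotProduct, dotProduct_add, dotProduct_smul, dotProduct_sub,
    smul_eq_mul] at hle hge h₀ ⊢
  rw [h₀] at hle
  nlinarith

theorem eventually_add_smul_mem_polyhedron [Finite ι] {a : ι → κ → ℚ} {b : ι → ℚ} {x z : κ → ℚ}
    (hx : ∀ i, b i ≤ dotp (a i) x) (hz : ∀ i, dotp (a i) x = b i → 0 ≤ dotp (a i) z) :
    ∀ᶠ ε in 𝓝[>] (0 : ℚ), ∀ i, b i ≤ dotp (a i) (x + ε • z) := by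
  refine eventually_all.2 fun i => ?_
  simp only [dotp_eq_dotProduct, dotProduct_add, dotProduct_smul, smul_eq_mul] at hx hz ⊢
  rcases (hx i).eq_or_lt with hi | hi
  · filter_upwards [self_mem_nhdsWithin] with ε hε
    nlinarith [hz i hi.symm, Set.mem_Ioi.1 hε]
  · have hlim : Tendsto (fun ε : ℚ => a i ⬝ᵥ x + ε * a i ⬝ᵥ z) (𝓝[>] 0) (𝓝 (a i ⬝ᵥ x)) := by
      have hcont : Continuous fun ε : ℚ => a i ⬝ᵥ x + ε * a i ⬝ᵥ z := by fun_prop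
      exact tendsto_nhdsWithin_of_tendsto_nhds (hcont.tendsto' 0 _ (by simp))
    exact (hlim.eventually (lt_mem_nhds hi)).mono fun _ h => h.le

theorem dotp_nonneg_of_mem_faceOf_polyhedron [Finite ι] {a : ι → κ → ℚ} {b : ι → ℚ}
    {w x z : κ → ℚ} (hx : x ∈ faceOf {y | ∀ i, b i ≤ dotp (a i) y} w)
    (hz : ∀ i, dotp (a i) x = b i → 0 ≤ dotp (a i) z) : 0 ≤ dotp w z := by
  obtain ⟨ε, hmem, hε⟩ :=
    ((eventually_add_smul_mem_polyhedron hx.1 hz).and self_mem_nhdsWithin).exists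
  have hle := hx.2 _ hmem
  simp only [dotp_eq_dotProduct, dotProduct_add, dotProduct_smul, smul_eq_mul,
    le_add_iff_nonneg_right] at hle
  exact (mul_nonneg_iff_of_pos_left (Set.mem_Ioi.1 hε)).1 hle

theorem sum_smul_mem_normalCone {A : ι → κ → ℚ} {F : Set (κ → ℚ)} {I : Finset ι} {c : ι → ℚ}
    (hFC : F ⊆ {x | ∀ i, 0 ≤ dotp (A i) x}) (hc : ∀ i ∈ I, 0 ≤ c i)
    (hI : ∀ i ∈ I, ∀ x ∈ F, dotp (A i) x = 0) :
    ∑ i ∈ I, c i • A i ∈ normalCone {x | ∀ i, 0 ≤ dotp (A i) x} F := by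
  intro x hx
  refine ⟨hFC hx, fun y hy => ?_⟩
  simp only [dotp_eq_dotProduct, sum_dotProduct, smul_dotProduct, smul_eq_mul]
  rw [sum_eq_zero fun i hi => by rw [← dotp_eq_dotProduct, hI i hi x hx, mul_zero]]
  exact sum_nonneg fun i hi => mul_nonneg (hc i hi) (hy i)

theorem image_comp_inl_normalCone_subset [Fintype τ] (C F : Set (κ ⊕ τ → ℚ)) (v : τ → ℚ) :
    (· ∘ Sum.inl) '' normalCone C F ⊆
      normalCone {x | Sum.elim x v ∈ C} {x | Sum.elim x v ∈ F} := by
  rintro _ ⟨w, hw, rfl⟩ x hx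
  refine ⟨(hw hx).1, fun y hy => ?_⟩
  have hle := (hw hx).2 _ hy
  rwa [dotp_sum_elim, dotp_sum_elim, add_le_add_iff_right] at hle

theorem setOf_sum_elim_mem_polyhedralCone [Fintype τ] (A : ι → κ ⊕ τ → ℚ) (v : τ → ℚ) :
    {x | Sum.elim x v ∈ {y | ∀ i, 0 ≤ dotp (A i) y}} =
      {x | ∀ i, -dotp (A i ∘ Sum.inr) v ≤ dotp (A i ∘ Sum.inl) x} := by
  ext x
  simp [dotp_sum_elim, neg_le_iff_add_nonneg]

end Polyhedra

theorem proj_normalCone_eq_general (m d : ℕ) (C : Set ((Fin m ⊕ Fin d) → ℚ))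
    (hC : IsPolyhedralCone C)
    (F : Set ((Fin m ⊕ Fin d) → ℚ)) (hF : IsFaceOf C F)
    (v : Fin d → ℚ)
    (hv : v ∈ (fun x : (Fin m ⊕ Fin d) → ℚ => x ∘ Sum.inr) '' relint F) :
    (fun w : (Fin m ⊕ Fin d) → ℚ => w ∘ Sum.inl) '' normalCone C F
      = normalCone {x' : Fin m → ℚ | Sum.elim x' v ∈ C}
          {x' : Fin m → ℚ | Sum.elim x' v ∈ F} := by
  obtain ⟨r, A, rfl⟩ := hC
  obtain ⟨x₀, hx₀, rfl⟩ := hv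
  have hFC : F ⊆ {x | ∀ i, 0 ≤ dotp (A i) x} := by
    obtain ⟨-, w, rfl⟩ := hF
    exact fun x hx => hx.1
  refine (image_comp_inl_normalCone_subset _ _ _).antisymm fun w' hw' => ?_
  set I := univ.filter fun i => dotp (A i) x₀ = 0
  have hx₀w' := hw' (show Sum.elim (x₀ ∘ Sum.inl) (x₀ ∘ Sum.inr) ∈ F by
    rw [Sum.elim_comp_inl_inr]; exact hx₀.1)
  rw [setOf_sum_elim_mem_polyhedralCone] at hx₀w'
  have hw'I : ∀ z, (∀ i ∈ I, 0 ≤ (A i ∘ Sum.inl) ⬝ᵥ z) → 0 ≤ w' ⬝ᵥ z := fun z hz =>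
    dotp_nonneg_of_mem_faceOf_polyhedron hx₀w' fun i hi => hz i <|
      mem_filter.2 ⟨mem_univ i, by linarith [dotp_eq_dotp_comp_inl_add (A i) x₀]⟩
  obtain ⟨c, hc, rfl⟩ := exists_nonneg_sum_smul_eq_of_forall_dotProduct_nonneg I _ w' hw'I
  refine ⟨∑ i ∈ I, c i • A i, sum_smul_mem_normalCone hFC hc fun i hi x hx => ?_, ?_⟩
  · exact dotp_eq_zero_of_mem_relint (fun y hy => hFC hy i) hx₀ (mem_filter.1 hi).2 hx
  · ext k
    simp [Finset.sum_apply]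

/-- for a face `F` of a full-dimensional cone `C` and `v ∈ π(relint F)`,
`π^∨(N_C(F)) = N_{C_v}(F_v)`. -/
theorem proj_normalCone_eq (m d : ℕ) (C : Set ((Fin m ⊕ Fin d) → ℚ))
    (hC : IsPolyhedralCone C) (hfull : Submodule.span ℚ C = ⊤)
    (F : Set ((Fin m ⊕ Fin d) → ℚ)) (hF : IsFaceOf C F)
    (v : Fin d → ℚ)
    (hv : v ∈ (fun x : (Fin m ⊕ Fin d) → ℚ => x ∘ Sum.inr) '' relint F) :
    (fun w : (Fin m ⊕ Fin d) → ℚ => w ∘ Sum.inl) '' normalCone C F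
      = normalCone {x' : Fin m → ℚ | Sum.elim x' v ∈ C}
          {x' : Fin m → ℚ | Sum.elim x' v ∈ F} :=
  proj_normalCone_eq_general m d C hC F hF v hv
end
end

section
/- Let C ⊆ ℚ^n be a full-dimensional polyhedral cone, π : ℚ^n → ℚ^d the projection onto the last d coordinates, and π^∨ : (ℚ^n)* → (ℚ^{n-d})* the projection onto the first n-d coordinates. Fix v ∈ π(C) and w ∈ π^∨(C^∨). For a face F of C, F equals the smallest face of C containing the preimage under π_{n-d} of face_w(C_v) if and only if v ∈ π(relint(F)) and w ∈ π^∨(relint(N_C(F))). -/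
open Finset Set Pointwise

noncomputable section

variable {ι : Type*}

section dotpLemmas

variable [Fintype ι]

lemma dotp_comm (w x : ι → ℚ) : dotp w x = dotp x w := by
  simp [dotp, mul_comm]

lemma dotp_add_right (w x y : ι → ℚ) : dotp w (x + y) = dotp w x + dotp w y := by
  simp [dotp, mul_add, Finset.sum_add_distrib]

lemma dotp_add_left (w x y : ι → ℚ) : dotp (w + x) y = dotp w y + dotp x y := by
  simp [dotp, add_mul, Finset.sum_add_distrib]

lemma dotp_smul_right (c : ℚ) (w x : ι → ℚ) : dotp w (c • x) = c * dotp w x := by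
  simp [dotp, Finset.mul_sum, mul_left_comm]

lemma dotp_smul_left (c : ℚ) (w x : ι → ℚ) : dotp (c • w) x = c * dotp w x := by
  simp [dotp, Finset.mul_sum, mul_assoc]

lemma dotp_sub_right (w x y : ι → ℚ) : dotp w (x - y) = dotp w x - dotp w y := by
  simp [dotp, mul_sub, Finset.sum_sub_distrib]

lemma dotp_sub_left (w x y : ι → ℚ) : dotp (w - x) y = dotp w y - dotp x y := by
  simp [dotp, sub_mul, Finset.sum_sub_distrib]

lemma dotp_zero_right (w : ι → ℚ) : dotp w 0 = 0 := by simp [dotp]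

lemma dotp_zero_left (w : ι → ℚ) : dotp 0 w = 0 := by simp [dotp]

lemma dotp_sum_left {κ : Type*} (s : Finset κ) (f : κ → ι → ℚ) (x : ι → ℚ) :
    dotp (∑ k ∈ s, f k) x = ∑ k ∈ s, dotp (f k) x := by
  simp only [dotp, Finset.sum_apply, Finset.sum_mul]
  exact Finset.sum_comm

lemma dotp_self_pos {w : ι → ℚ} (hw : w ≠ 0) : 0 < dotp w w := by
  have h : ∃ i, w i ≠ 0 := by
    by_contra h
    push_neg at h
    exact hw (funext h)
  obtain ⟨i, hi⟩ := h
  refine Finset.sum_pos' (fun j _ => mul_self_nonneg _) ⟨i, Finset.mem_univ i, ?_⟩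
  exact mul_self_pos.mpr hi

end dotpLemmas

/-- helper: choose a uniform small ε -/
lemma exists_pos_eps {κ : Type*} [Fintype κ] (s d : κ → ℚ) (hs : ∀ i, 0 < s i) :
    ∃ ε : ℚ, 0 < ε ∧ ∀ i, 0 ≤ s i + ε * d i := by
  classical
  set T : Finset ℚ :=
    insert 1 (Finset.univ.image (fun i => if d i < 0 then s i / (-(d i)) else 1)) with hT
  have hne : T.Nonempty := ⟨1, Finset.mem_insert_self _ _⟩
  have hpos : ∀ t ∈ T, 0 < t := by
    intro t ht
    rw [hT, Finset.mem_insert] at ht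
    rcases ht with rfl | ht
    · norm_num
    · obtain ⟨i, -, rfl⟩ := Finset.mem_image.mp ht
      by_cases hd : d i < 0
      · simp only [hd, if_true]
        exact div_pos (hs i) (by linarith)
      · simp [hd]
  refine ⟨T.min' hne, hpos _ (T.min'_mem hne), fun i => ?_⟩
  by_cases hd : d i < 0
  · have hmem : s i / (-(d i)) ∈ T := by
      rw [hT]
      refine Finset.mem_insert_of_mem (Finset.mem_image.mpr ⟨i, Finset.mem_univ i, ?_⟩)
      simp [hd]
    have hle := T.min'_le _ hmem
    have hd' : (0:ℚ) < -(d i) := by linarith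
    have := (le_div_iff₀ hd').mp hle
    nlinarith
  · push_neg at hd
    have h1 := hpos _ (T.min'_mem hne)
    linarith [mul_nonneg h1.le hd, hs i]

/-- polyhedron with arbitrary finite index type -/
lemma isPolyhedron_of_index {κ : Type} [Fintype κ] [Fintype ι] (A : κ → ι → ℚ) (b : κ → ℚ) :
    IsPolyhedron {x : ι → ℚ | ∀ i, b i ≤ dotp (A i) x} := by
  classical
  obtain ⟨e⟩ := Fintype.truncEquivFin κ
  refine ⟨Fintype.card κ, A ∘ e.symm, b ∘ e.symm, ?_⟩
  ext x
  constructor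
  · intro h j
    exact h (e.symm j)
  · intro h i
    simpa using h (e i)

/-- Fourier–Motzkin elimination of one variable. -/
lemma fm_elim {σ : Type} [Fintype σ] {P : Set ((σ ⊕ Unit) → ℚ)} (h : IsPolyhedron P) :
    IsPolyhedron {y : σ → ℚ | ∃ t : ℚ, Sum.elim y (fun _ => t) ∈ P} := by
  classical
  obtain ⟨r, A, b, rfl⟩ := h
  set a : Fin r → ℚ := fun i => A i (Sum.inr ()) with ha
  set g : Fin r → σ → ℚ := fun i => A i ∘ Sum.inl with hg
  have key : ∀ (i : Fin r) (y : σ → ℚ) (t : ℚ),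
      dotp (A i) (Sum.elim y (fun _ => t)) = dotp (g i) y + a i * t := by
    intro i y t
    simp [dotp, Fintype.sum_sum_type, hg, ha, Function.comp]
  set κ := ({i : Fin r // a i = 0} ⊕ ({i : Fin r // 0 < a i} × {i : Fin r // a i < 0})) with hκ
  set Arow : κ → σ → ℚ := fun j =>
    Sum.elim (fun i => g i.1)
      (fun q => fun e => a q.1.1 * g q.2.1 e - a q.2.1 * g q.1.1 e) j with hArow
  set brow : κ → ℚ := fun j =>
    Sum.elim (fun i => b i.1) (fun q => a q.1.1 * b q.2.1 - a q.2.1 * b q.1.1) j with hbrow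
  have hdot : ∀ (i j : Fin r) (y : σ → ℚ),
      dotp (fun e => a i * g j e - a j * g i e) y = a i * dotp (g j) y - a j * dotp (g i) y := by
    intro i j y
    simp [dotp, sub_mul, mul_assoc, Finset.sum_sub_distrib, Finset.mul_sum]
  have hset : {y : σ → ℚ | ∃ t, Sum.elim y (fun _ => t) ∈
        {x | ∀ i, b i ≤ dotp (A i) x}}
      = {y : σ → ℚ | ∀ j, brow j ≤ dotp (Arow j) y} := by
    ext y
    simp only [Set.mem_setOf_eq]
    constructor
    · rintro ⟨t, ht⟩ j
      rcases j with ⟨i, hi⟩ | ⟨⟨i, hi⟩, ⟨j, hj⟩⟩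
      · have := ht i
        rw [key] at this
        simpa [hArow, hbrow, hi] using this
      · have h1 := ht i
        have h2 := ht j
        rw [key] at h1 h2
        simp only [hArow, hbrow, Sum.elim_inr]
        rw [hdot]
        nlinarith [mul_le_mul_of_nonneg_left h2 hi.le,
          mul_le_mul_of_nonneg_left h1 (by linarith : (0:ℚ) ≤ -(a j))]
    · intro hy
      set Lo : Finset ℚ := (Finset.univ.filter (fun i => 0 < a i)).image
        (fun i => (b i - dotp (g i) y) / a i) with hLo
      set Hi : Finset ℚ := (Finset.univ.filter (fun i => a i < 0)).image
        (fun i => (b i - dotp (g i) y) / a i) with hHi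
      have hupper : ∀ (t : ℚ), (∀ u ∈ Lo, u ≤ t) → (∀ u ∈ Hi, t ≤ u) →
          ∀ i, b i ≤ dotp (A i) (Sum.elim y (fun _ => t)) := by
        intro t hlo hhi i
        rw [key]
        rcases lt_trichotomy (a i) 0 with hneg | hzero | hpos
        · have hmem : (b i - dotp (g i) y) / a i ∈ Hi := by
            rw [hHi]
            exact Finset.mem_image.mpr ⟨i, Finset.mem_filter.mpr ⟨Finset.mem_univ i, hneg⟩, rfl⟩
          have := hhi _ hmem
          have hcan : (b i - dotp (g i) y) / a i * a i = b i - dotp (g i) y :=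
            div_mul_cancel₀ _ (ne_of_lt hneg)
          nlinarith [mul_le_mul_of_nonpos_right this hneg.le]
        · have := hy (Sum.inl ⟨i, hzero⟩)
          simp only [hArow, hbrow, Sum.elim_inl] at this
          simpa [hzero] using this
        · have hmem : (b i - dotp (g i) y) / a i ∈ Lo := by
            rw [hLo]
            exact Finset.mem_image.mpr ⟨i, Finset.mem_filter.mpr ⟨Finset.mem_univ i, hpos⟩, rfl⟩
          have := hlo _ hmem
          have := (div_le_iff₀ hpos).mp this
          linarith
      have hLoHi : ∀ u ∈ Lo, ∀ u' ∈ Hi, u ≤ u' := by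
        intro u hu u' hu'
        rw [hLo] at hu
        rw [hHi] at hu'
        obtain ⟨i, hi, rfl⟩ := Finset.mem_image.mp hu
        obtain ⟨j, hj, rfl⟩ := Finset.mem_image.mp hu'
        have hi' := (Finset.mem_filter.mp hi).2
        have hj' := (Finset.mem_filter.mp hj).2
        have hpair := hy (Sum.inr (⟨⟨i, hi'⟩, ⟨j, hj'⟩⟩))
        simp only [hArow, hbrow, Sum.elim_inr] at hpair
        rw [hdot] at hpair
        rw [div_le_iff₀ hi']
        have hq : (b j - dotp (g j) y) / a j * a j = b j - dotp (g j) y :=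
          div_mul_cancel₀ _ (ne_of_lt hj')
        nlinarith [hpair, hq]
      by_cases hLone : Lo.Nonempty
      · refine ⟨Lo.max' hLone, hupper _ (fun u hu => Lo.le_max' u hu) ?_⟩
        intro u' hu'
        exact hLoHi _ (Lo.max'_mem hLone) _ hu'
      · by_cases hHine : Hi.Nonempty
        · refine ⟨Hi.min' hHine, hupper _ ?_ (fun u hu => Hi.min'_le u hu)⟩
          intro u hu
          exact absurd ⟨u, hu⟩ hLone
        · refine ⟨0, hupper 0 ?_ ?_⟩
          · intro u hu; exact absurd ⟨u, hu⟩ hLone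
          · intro u hu; exact absurd ⟨u, hu⟩ hHine
  rw [hset]
  exact isPolyhedron_of_index Arow brow

lemma poly_reindex {κ ι : Type} [Fintype κ] [Fintype ι] (e : ι ≃ κ) {P : Set (ι → ℚ)}
    (h : IsPolyhedron P) : IsPolyhedron {z : κ → ℚ | z ∘ e ∈ P} := by
  obtain ⟨r, A, b, rfl⟩ := h
  refine ⟨r, fun i => A i ∘ e.symm, b, ?_⟩
  ext z
  simp only [Set.mem_setOf_eq]
  have hdot : ∀ i, dotp (A i) (z ∘ e) = dotp (A i ∘ e.symm) z := by
    intro i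
    show (∑ j, A i j * z (e j)) = ∑ k, A i (e.symm k) * z k
    rw [← Equiv.sum_comp e (fun k => A i (e.symm k) * z k)]
    simp
  exact forall_congr' fun i => by rw [hdot]

lemma proj_poly_aux (n : ℕ) : ∀ (σ : Type) [Fintype σ], Fintype.card σ = n →
    ∀ (τ : Type) [Fintype τ] (P : Set ((σ ⊕ τ) → ℚ)), IsPolyhedron P →
    IsPolyhedron {y : τ → ℚ | ∃ x : σ → ℚ, Sum.elim x y ∈ P} := by
  induction n with
  | zero =>
    intro σ _ hcard τ _ P hP
    have hσ : IsEmpty σ := Fintype.card_eq_zero_iff.mp hcard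
    obtain ⟨r, A, b, rfl⟩ := hP
    have hdot : ∀ (x : σ → ℚ) (y : τ → ℚ) i,
        dotp (A i) (Sum.elim x y) = dotp (A i ∘ Sum.inr) y := by
      intro x y i
      simp [dotp, Fintype.sum_sum_type, Function.comp]
    refine ⟨r, fun i => A i ∘ Sum.inr, b, ?_⟩
    ext y
    constructor
    · rintro ⟨x, hx⟩ i
      rw [← hdot x y i]; exact hx i
    · intro h
      exact ⟨fun s => (hσ.false s).elim, fun i => by rw [hdot]; exact h i⟩
  | succ n ih =>
    intro σ _ hcard τ _ P hP
    have e : σ ≃ (Fin n ⊕ Unit) :=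
      (Fintype.equivFinOfCardEq hcard).trans
        (finSumFinEquiv.symm.trans (Equiv.sumCongr (Equiv.refl (Fin n)) finOneEquiv))
    let χ : (σ ⊕ τ) ≃ ((Fin n ⊕ τ) ⊕ Unit) :=
      (Equiv.sumCongr e (Equiv.refl τ)).trans ((Equiv.sumAssoc _ _ _).trans
        ((Equiv.sumCongr (Equiv.refl (Fin n)) (Equiv.sumComm Unit τ)).trans
          (Equiv.sumAssoc (Fin n) τ Unit).symm))
    have hcomp : ∀ (x'' : Fin n → ℚ) (t : ℚ) (y : τ → ℚ),
        (Sum.elim (Sum.elim x'' y) (fun _ : Unit => t)) ∘ (χ : (σ ⊕ τ) → ((Fin n ⊕ τ) ⊕ Unit))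
          = Sum.elim ((Sum.elim x'' (fun _ : Unit => t)) ∘ e) y := by
      intro x'' t y
      funext s
      rcases s with s | tt
      · rcases h : e s with k | u <;>
          simp [χ, h, Equiv.sumCongr_apply, Equiv.trans_apply]
      · simp [χ, Equiv.sumCongr_apply, Equiv.trans_apply]
    have hkey : {y : τ → ℚ | ∃ x : σ → ℚ, Sum.elim x y ∈ P}
        = {y : τ → ℚ | ∃ x'' : Fin n → ℚ, Sum.elim x'' y ∈
            {y' : (Fin n ⊕ τ) → ℚ | ∃ t : ℚ, Sum.elim y' (fun _ => t) ∈
              {z : ((Fin n ⊕ τ) ⊕ Unit) → ℚ | z ∘ χ ∈ P}}} := by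
      ext y
      simp only [Set.mem_setOf_eq]
      constructor
      · rintro ⟨x, hx⟩
        refine ⟨fun k => x (e.symm (Sum.inl k)), x (e.symm (Sum.inr ())), ?_⟩
        rw [hcomp]
        have : (Sum.elim (fun k => x (e.symm (Sum.inl k))) (fun _ : Unit => x (e.symm (Sum.inr ())))) ∘ e = x := by
          funext s
          rcases h : e s with k | u
          · have : e.symm (Sum.inl k) = s := by rw [← h]; exact e.symm_apply_apply s
            simp [h, this]
          · have : e.symm (Sum.inr u) = s := by rw [← h]; exact e.symm_apply_apply s
            simp [h, this]
        rw [this]; exact hx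
      · rintro ⟨x'', t, hx⟩
        rw [hcomp] at hx
        exact ⟨_, hx⟩
    rw [hkey]
    exact ih (Fin n) (Fintype.card_fin n) τ _ (fm_elim (poly_reindex χ hP))

/-- projection of a polyhedron is a polyhedron -/
lemma proj_poly {σ τ : Type} [Fintype σ] [Fintype τ] {P : Set ((σ ⊕ τ) → ℚ)}
    (h : IsPolyhedron P) : IsPolyhedron {y : τ → ℚ | ∃ x : σ → ℚ, Sum.elim x y ∈ P} :=
  proj_poly_aux (Fintype.card σ) σ rfl τ P h

lemma dotp_split {σ τ : Type*} [Fintype σ] [Fintype τ] (u z : (σ ⊕ τ) → ℚ) :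
    dotp u z = dotp (u ∘ Sum.inl) (z ∘ Sum.inl) + dotp (u ∘ Sum.inr) (z ∘ Sum.inr) := by
  simp [dotp, Fintype.sum_sum_type, Function.comp]

lemma dotp_unit (u z : Unit → ℚ) : dotp u z = u () * z () := by
  simp [dotp]

/-- LP attainment over ℚ: a linear functional bounded below on a nonempty
polyhedron attains its minimum. -/
lemma lp_min {ι : Type} [Fintype ι] {P : Set (ι → ℚ)} (hP : IsPolyhedron P)
    (hne : P.Nonempty) (c : ι → ℚ) (M : ℚ) (hbd : ∀ x ∈ P, M ≤ dotp c x) :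
    ∃ x ∈ P, ∀ y ∈ P, dotp c x ≤ dotp c y := by
  classical
  obtain ⟨x₀, hx₀⟩ := hne
  obtain ⟨r, A, b, hPeq⟩ := hP
  set rowE : (ι ⊕ Unit) → ℚ := Sum.elim c (fun _ => (-1 : ℚ)) with hrowE
  set Arows : (Fin r ⊕ Bool) → (ι ⊕ Unit) → ℚ :=
    Sum.elim (fun i => Sum.elim (A i) 0) (fun s => if s then rowE else -rowE) with hArows
  set brows : (Fin r ⊕ Bool) → ℚ := Sum.elim b (fun _ => 0) with hbrows
  set R : Set ((ι ⊕ Unit) → ℚ) := {z | ∀ j, brows j ≤ dotp (Arows j) z} with hRdef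
  have hrowdot : ∀ z : (ι ⊕ Unit) → ℚ, dotp rowE z = dotp c (z ∘ Sum.inl) - z (Sum.inr ()) := by
    intro z
    rw [hrowE, dotp_split, Sum.elim_comp_inl, Sum.elim_comp_inr, dotp_unit]
    show dotp c (z ∘ Sum.inl) + (-1) * (z (Sum.inr ())) = _
    ring
  have hR : ∀ z : (ι ⊕ Unit) → ℚ,
      z ∈ R ↔ (z ∘ Sum.inl ∈ P ∧ dotp c (z ∘ Sum.inl) = z (Sum.inr ())) := by
    intro z
    constructor
    · intro hz
      have h1 := hz (Sum.inr true)
      have h2 := hz (Sum.inr false)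
      simp only [hArows, hbrows, Sum.elim_inr, if_true, Bool.false_eq_true, if_false] at h1 h2
      rw [hrowdot] at h1
      have h2' : dotp (-rowE) z = -(dotp c (z ∘ Sum.inl) - z (Sum.inr ())) := by
        have : (-rowE) = (-1 : ℚ) • rowE := by funext e; simp
        rw [this, dotp_smul_left, hrowdot]; ring
      rw [h2'] at h2
      refine ⟨?_, by linarith⟩
      rw [hPeq]
      intro i
      have := hz (Sum.inl i)
      simp only [hArows, hbrows, Sum.elim_inl] at this
      rw [dotp_split] at this
      simpa [Sum.elim_comp_inl, Sum.elim_comp_inr, dotp_zero_left] using this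
    · rintro ⟨hz1, hz2⟩ j
      rcases j with i | s
      · simp only [hArows, hbrows, Sum.elim_inl]
        rw [dotp_split]
        simp only [Sum.elim_comp_inl, Sum.elim_comp_inr, dotp_zero_left, add_zero]
        rw [hPeq] at hz1
        exact hz1 i
      · rcases s with _ | _ <;>
          simp only [hArows, hbrows, Sum.elim_inr, if_true, Bool.false_eq_true, if_false]
        · have h3 : (-rowE) = (-1 : ℚ) • rowE := by funext e; simp
          rw [h3, dotp_smul_left, hrowdot]
          linarith
        · rw [hrowdot]; linarith
  have hRpoly : IsPolyhedron R := isPolyhedron_of_index Arows brows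
  have hQpoly := proj_poly (σ := ι) (τ := Unit) hRpoly
  have hQmem : ∀ q : ℚ, ((fun _ : Unit => q) ∈
      {u : Unit → ℚ | ∃ x : ι → ℚ, Sum.elim x u ∈ R}) ↔ ∃ x ∈ P, dotp c x = q := by
    intro q
    constructor
    · rintro ⟨x, hx⟩
      rw [hR] at hx
      refine ⟨x, ?_, ?_⟩
      · have : Sum.elim x (fun _ : Unit => q) ∘ Sum.inl = x := Sum.elim_comp_inl _ _
        rw [this] at hx; exact hx.1
      · have h1 : Sum.elim x (fun _ : Unit => q) ∘ Sum.inl = x := Sum.elim_comp_inl _ _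
        have := hx.2
        rw [h1] at this
        simpa using this
    · rintro ⟨x, hx, hcx⟩
      refine ⟨x, ?_⟩
      rw [hR]
      constructor
      · rw [Sum.elim_comp_inl]; exact hx
      · rw [Sum.elim_comp_inl]; simp [hcx]
  obtain ⟨r', α, β, hQ⟩ := hQpoly
  set a : Fin r' → ℚ := fun j => α j () with hadef
  have hQ' : ∀ q : ℚ, (∃ x ∈ P, dotp c x = q) ↔ ∀ j, β j ≤ a j * q := by
    intro q
    rw [← hQmem q]
    constructor
    · intro h j
      have := hQ ▸ h
      have h2 := this j
      rwa [dotp_unit] at h2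
    · intro h
      rw [hQ]
      intro j
      rw [dotp_unit]
      exact h j
  have ht₀ : ∀ j, β j ≤ a j * dotp c x₀ := (hQ' _).mp ⟨x₀, hx₀, rfl⟩
  set Jpos := Finset.univ.filter (fun j => 0 < a j) with hJpos
  by_cases hJ : Jpos.Nonempty
  · set img := Jpos.image (fun j => β j / a j) with himg
    have himgne : img.Nonempty := hJ.image _
    set tstar := img.max' himgne with htstar
    have htlet₀ : tstar ≤ dotp c x₀ := by
      refine Finset.max'_le _ _ _ ?_
      intro u hu
      obtain ⟨j, hj, rfl⟩ := Finset.mem_image.mp hu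
      have hjpos := (Finset.mem_filter.mp hj).2
      rw [div_le_iff₀ hjpos]
      linarith [ht₀ j, mul_comm (a j) (dotp c x₀)]
    have htmem : ∀ j, β j ≤ a j * tstar := by
      intro j
      rcases le_or_gt (a j) 0 with hneg | hpos
      · calc β j ≤ a j * dotp c x₀ := ht₀ j
          _ ≤ a j * tstar := mul_le_mul_of_nonpos_left htlet₀ hneg
      · have hmem : β j / a j ∈ img :=
          Finset.mem_image.mpr ⟨j, Finset.mem_filter.mpr ⟨Finset.mem_univ j, hpos⟩, rfl⟩
        have := Finset.le_max' _ _ hmem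
        rw [div_le_iff₀ hpos] at this
        linarith [mul_comm tstar (a j)]
    obtain ⟨xs, hxs, hxsval⟩ := (hQ' tstar).mpr htmem
    refine ⟨xs, hxs, ?_⟩
    intro y hy
    have hq := (hQ' (dotp c y)).mp ⟨y, hy, rfl⟩
    rw [hxsval]
    obtain ⟨j, hj, hjeq⟩ := Finset.mem_image.mp (img.max'_mem himgne)
    have hjpos := (Finset.mem_filter.mp hj).2
    rw [← htstar] at hjeq
    rw [← hjeq, div_le_iff₀ hjpos]
    linarith [hq j, mul_comm (a j) (dotp c y)]
  · exfalso
    have hall : ∀ j, a j ≤ 0 := by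
      intro j
      by_contra h
      push_neg at h
      exact hJ ⟨j, Finset.mem_filter.mpr ⟨Finset.mem_univ j, h⟩⟩
    have : ∀ j, β j ≤ a j * (M - 1) := by
      intro j
      calc β j ≤ a j * dotp c x₀ := ht₀ j
        _ ≤ a j * (M - 1) := by
            have := hbd x₀ hx₀
            exact mul_le_mul_of_nonpos_left (by linarith) (hall j)
    obtain ⟨x, hx, hval⟩ := (hQ' (M - 1)).mpr this
    have := hbd x hx
    linarith

lemma dotp_delta {ι : Type*} [Fintype ι] [DecidableEq ι] (l₀ : ι) (z : ι → ℚ) :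
    dotp (fun l => if l = l₀ then (1:ℚ) else 0) z = z l₀ := by
  simp [dotp, ite_mul, one_mul, zero_mul]

/-- Farkas' lemma over ℚ. -/
lemma farkas {ι : Type} [Fintype ι] {κ : Type} [Fintype κ] (bgen : κ → ι → ℚ) (u : ι → ℚ)
    (h : ¬ ∃ μ : κ → ℚ, (∀ k, 0 ≤ μ k) ∧ u = fun i => ∑ k, μ k * bgen k i) :
    ∃ z : ι → ℚ, (∀ k, 0 ≤ dotp (bgen k) z) ∧ dotp u z < 0 := by
  classical
  set δ : κ → (κ ⊕ ι) → ℚ := fun k => fun l => if l = Sum.inl k then (1:ℚ) else 0 with hδ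
  set ρ : ι → (κ ⊕ ι) → ℚ :=
    fun i => Sum.elim (fun k => bgen k i) (fun i' => if i' = i then (-1:ℚ) else 0) with hρ
  set Arows : (κ ⊕ (ι ⊕ ι)) → (κ ⊕ ι) → ℚ :=
    Sum.elim δ (Sum.elim ρ (fun i => -ρ i)) with hArows
  set R : Set ((κ ⊕ ι) → ℚ) := {z | ∀ j, (0:ℚ) ≤ dotp (Arows j) z} with hRdef
  have hδdot : ∀ (k : κ) (z : (κ ⊕ ι) → ℚ), dotp (δ k) z = z (Sum.inl k) := by
    intro k z
    rw [hδ]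
    exact dotp_delta (Sum.inl k) z
  have hρdot : ∀ (i : ι) (z : (κ ⊕ ι) → ℚ),
      dotp (ρ i) z = (∑ k, bgen k i * z (Sum.inl k)) - z (Sum.inr i) := by
    intro i z
    rw [hρ, dotp_split, Sum.elim_comp_inl, Sum.elim_comp_inr]
    have h2 : dotp (fun i' => if i' = i then (-1:ℚ) else 0) (z ∘ Sum.inr)
        = -(z (Sum.inr i)) := by
      have : (fun i' => if i' = i then (-1:ℚ) else 0)
          = (-1 : ℚ) • (fun i' => if i' = i then (1:ℚ) else 0) := by
        funext i'; by_cases hii : i' = i <;> simp [hii]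
      rw [this, dotp_smul_left, dotp_delta]
      simp
    rw [h2]
    simp only [dotp, Function.comp_apply, sub_eq_add_neg]
  have hRmem : ∀ z, z ∈ R ↔ ((∀ k, 0 ≤ z (Sum.inl k)) ∧
      ∀ i, z (Sum.inr i) = ∑ k, z (Sum.inl k) * bgen k i) := by
    intro z
    constructor
    · intro hz
      constructor
      · intro k
        have := hz (Sum.inl k)
        rwa [hArows, Sum.elim_inl, hδdot] at this
      · intro i
        have h1 := hz (Sum.inr (Sum.inl i))
        have h2 := hz (Sum.inr (Sum.inr i))
        rw [hArows, Sum.elim_inr, Sum.elim_inl, hρdot] at h1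
        rw [hArows, Sum.elim_inr, Sum.elim_inr] at h2
        have hneg : dotp (-ρ i) z = -dotp (ρ i) z := by
          have : (-ρ i) = (-1 : ℚ) • ρ i := by funext e; simp
          rw [this, dotp_smul_left]; ring
        rw [hneg, hρdot] at h2
        have : z (Sum.inr i) = ∑ k, bgen k i * z (Sum.inl k) := by linarith
        rw [this]
        exact Finset.sum_congr rfl (fun k _ => mul_comm _ _)
    · rintro ⟨h1, h2⟩ j
      rcases j with k | (i | i)
      · rw [hArows, Sum.elim_inl, hδdot]; exact h1 k
      · rw [hArows, Sum.elim_inr, Sum.elim_inl, hρdot, h2 i]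
        have : (∑ k, z (Sum.inl k) * bgen k i) = ∑ k, bgen k i * z (Sum.inl k) :=
          Finset.sum_congr rfl (fun k _ => mul_comm _ _)
        rw [this]; simp
      · rw [hArows, Sum.elim_inr, Sum.elim_inr]
        have hneg : dotp (-ρ i) z = -dotp (ρ i) z := by
          have : (-ρ i) = (-1 : ℚ) • ρ i := by funext e; simp
          rw [this, dotp_smul_left]; ring
        rw [hneg, hρdot, h2 i]
        have : (∑ k, z (Sum.inl k) * bgen k i) = ∑ k, bgen k i * z (Sum.inl k) :=
          Finset.sum_congr rfl (fun k _ => mul_comm _ _)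
        rw [this]; simp
  have hRpoly : IsPolyhedron R := isPolyhedron_of_index Arows (fun _ => 0)
  have hKmem : ∀ y : ι → ℚ, (y ∈ {y : ι → ℚ | ∃ x : κ → ℚ, Sum.elim x y ∈ R}) ↔
      ∃ μ : κ → ℚ, (∀ k, 0 ≤ μ k) ∧ y = fun i => ∑ k, μ k * bgen k i := by
    intro y
    constructor
    · rintro ⟨x, hx⟩
      rw [hRmem] at hx
      refine ⟨x, ?_, ?_⟩
      · intro k; exact hx.1 k
      · funext i; exact hx.2 i
    · rintro ⟨μ, hμ, hy⟩
      refine ⟨μ, ?_⟩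
      rw [hRmem]
      exact ⟨fun k => hμ k, fun i => by rw [hy]; simp⟩
  obtain ⟨r', D, β, hK⟩ := proj_poly (σ := κ) (τ := ι) hRpoly
  have hu : u ∉ {y : ι → ℚ | ∃ x : κ → ℚ, Sum.elim x y ∈ R} := fun hc => h ((hKmem u).mp hc)
  rw [hK] at hu
  simp only [Set.mem_setOf_eq, not_forall, not_le] at hu
  obtain ⟨j, hj⟩ := hu
  have hmemK : ∀ y : ι → ℚ, (∃ μ : κ → ℚ, (∀ k, 0 ≤ μ k) ∧ y = fun i => ∑ k, μ k * bgen k i)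
      → β j ≤ dotp (D j) y := by
    intro y hy
    have := (hKmem y).mpr hy
    rw [hK] at this
    exact this j
  have hβ : β j ≤ 0 := by
    have := hmemK 0 ⟨0, fun k => le_refl 0, by funext i; simp⟩
    rwa [dotp_zero_right] at this
  have hgen : ∀ k, 0 ≤ dotp (D j) (bgen k) := by
    intro k
    by_contra hc
    push_neg at hc
    have hmem : ∀ lam : ℚ, 0 ≤ lam → β j ≤ lam * dotp (D j) (bgen k) := by
      intro lam hlam
      have hmem2 : (lam • bgen k : ι → ℚ) = fun i => ∑ k', (if k' = k then lam else 0) * bgen k' i := by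
        funext i
        simp [ite_mul, zero_mul]
      have := hmemK (lam • bgen k)
        ⟨fun k' => if k' = k then lam else 0, fun k' => by by_cases hkk : k' = k <;> simp [hkk, hlam], hmem2⟩
      rwa [dotp_smul_right] at this
    have := hmem ((β j - 1) / dotp (D j) (bgen k))
      (le_of_lt (div_pos_of_neg_of_neg (by linarith) hc))
    rw [div_mul_cancel₀ _ (ne_of_lt hc)] at this
    linarith
  refine ⟨D j, fun k => by rw [dotp_comm]; exact hgen k, ?_⟩
  rw [dotp_comm]
  linarith

section faces

variable {ι : Type*} [Fintype ι]

/-- a linear functional nonnegative on C and vanishing at a relint point of F ⊆ C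
vanishes on all of F. -/
lemma vanish_on_relint {C F : Set (ι → ℚ)} (hFC : F ⊆ C) {u : ι → ℚ}
    (hu : ∀ x ∈ C, 0 ≤ dotp u x) {p : ι → ℚ} (hp : p ∈ relint F) (hp0 : dotp u p = 0) :
    ∀ y ∈ F, dotp u y = 0 := by
  intro y hy
  obtain ⟨ε, hε, hmem⟩ := hp.2 y hy
  have h1 := hu _ (hFC hmem)
  rw [dotp_add_right, dotp_smul_right, dotp_sub_right, hp0] at h1
  have h2 := hu y (hFC hy)
  nlinarith

/-- the functional of a nonempty face of a cone is in the dual cone, and the face is the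
zero set. -/
lemma face_char {C : Set (ι → ℚ)} (hCz : (0 : ι → ℚ) ∈ C)
    (hCs : ∀ x ∈ C, ∀ lam : ℚ, 0 < lam → lam • x ∈ C) {u : ι → ℚ}
    (hne : (faceOf C u).Nonempty) :
    (∀ x ∈ C, 0 ≤ dotp u x) ∧ faceOf C u = {x | x ∈ C ∧ dotp u x = 0} := by
  obtain ⟨g, hg⟩ := hne
  have hg0 : dotp u g ≤ 0 := by
    have := hg.2 0 hCz
    rwa [dotp_zero_right] at this
  have hdual : ∀ x ∈ C, 0 ≤ dotp u x := by
    intro x hx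
    by_contra hc
    push_neg at hc
    have hlam : 0 < (dotp u g - 1) / dotp u x := div_pos_of_neg_of_neg (by linarith) hc
    have := hg.2 _ (hCs x hx _ hlam)
    rw [dotp_smul_right, div_mul_cancel₀ _ (ne_of_lt hc)] at this
    linarith
  have hg0' : dotp u g = 0 := le_antisymm hg0 (hdual g hg.1)
  refine ⟨hdual, ?_⟩
  ext x
  constructor
  · rintro ⟨hx, hmin⟩
    refine ⟨hx, le_antisymm ?_ (hdual x hx)⟩
    have := hmin g hg.1
    linarith
  · rintro ⟨hx, hx0⟩
    exact ⟨hx, fun y hy => by rw [hx0]; exact hdual y hy⟩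

/-- for u in the dual cone, the face is the zero set. -/
lemma face_eq_zero_set {C : Set (ι → ℚ)} (hCz : (0 : ι → ℚ) ∈ C) {u : ι → ℚ}
    (hu : ∀ x ∈ C, 0 ≤ dotp u x) :
    faceOf C u = {x | x ∈ C ∧ dotp u x = 0} := by
  ext x
  constructor
  · rintro ⟨hx, hmin⟩
    refine ⟨hx, le_antisymm ?_ (hu x hx)⟩
    have := hmin 0 hCz
    rwa [dotp_zero_right] at this
  · rintro ⟨hx, hx0⟩
    exact ⟨hx, fun y hy => by rw [hx0]; exact hu y hy⟩

end faces

lemma dotp_sum_right {ι : Type*} [Fintype ι] {κ : Type*} (s : Finset κ) (u : ι → ℚ)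
    (f : κ → ι → ℚ) : dotp u (∑ k ∈ s, f k) = ∑ k ∈ s, dotp u (f k) := by
  rw [dotp_comm, dotp_sum_left]
  exact Finset.sum_congr rfl (fun k _ => dotp_comm _ _)

lemma dotp_comb {ι : Type*} [Fintype ι] {κ : Type*} [Fintype κ] (μ : κ → ℚ) (A : κ → ι → ℚ)
    (x : ι → ℚ) : dotp (fun e => ∑ k, μ k * A k e) x = ∑ k, μ k * dotp (A k) x := by
  simp only [dotp, Finset.sum_mul, Finset.mul_sum, mul_assoc]
  exact Finset.sum_comm

lemma dotp_move {ι : Type*} [Fintype ι] (u q y : ι → ℚ) (ε : ℚ) :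
    dotp u (q + ε • (q - y)) = dotp u q + ε * (dotp u q - dotp u y) := by
  rw [dotp_add_right, dotp_smul_right, dotp_sub_right]

set_option maxHeartbeats 1600000 in
/-- every nonempty polyhedron has a relative interior point. -/
lemma relint_nonempty {ι : Type*} [Fintype ι] {P : Set (ι → ℚ)} (h : IsPolyhedron P)
    (hne : P.Nonempty) : ∃ p, p ∈ relint P := by
  classical
  obtain ⟨r, A, b, rfl⟩ := h
  obtain ⟨x₀, hx₀⟩ := hne
  set Pr : Set (ι → ℚ) := {x | ∀ i, b i ≤ dotp (A i) x} with hPr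
  set J : Finset (Fin r) :=
    Finset.univ.filter (fun i => ∃ x ∈ Pr, b i < dotp (A i) x) with hJ
  set xf : Fin r → (ι → ℚ) := fun i =>
    if hi : ∃ x ∈ Pr, b i < dotp (A i) x then hi.choose else x₀ with hxf
  have hxfP : ∀ i, xf i ∈ Pr := by
    intro i
    show (if hi : ∃ x ∈ Pr, b i < dotp (A i) x then hi.choose else x₀) ∈ Pr
    split
    · next hi => exact hi.choose_spec.1
    · exact hx₀
  have hxfstrict : ∀ i ∈ J, b i < dotp (A i) (xf i) := by
    intro i hi
    have hi' := (Finset.mem_filter.mp hi).2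
    show b i < dotp (A i) (if hi : ∃ x ∈ Pr, b i < dotp (A i) x then hi.choose else x₀)
    rw [dif_pos hi']
    exact hi'.choose_spec.2
  have heq : ∀ i, i ∉ J → ∀ x ∈ Pr, dotp (A i) x = b i := by
    intro i hi x hx
    have : ¬ ∃ x ∈ Pr, b i < dotp (A i) x := by
      intro hc
      exact hi (Finset.mem_filter.mpr ⟨Finset.mem_univ i, hc⟩)
    push_neg at this
    exact le_antisymm (this x hx) (hx i)
  set N : ℕ := J.card with hN
  set p : ι → ℚ := ((N : ℚ) + 1)⁻¹ • (x₀ + ∑ i ∈ J, xf i) with hp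
  have hdenpos : (0:ℚ) < (N : ℚ) + 1 := by positivity
  have hdot : ∀ i', dotp (A i') p
      = ((N:ℚ)+1)⁻¹ * (dotp (A i') x₀ + ∑ i ∈ J, dotp (A i') (xf i)) := by
    intro i'
    rw [hp, dotp_smul_right, dotp_add_right, dotp_sum_right]
  have hpmem : p ∈ Pr := by
    intro i'
    rw [hdot]
    have hsum : (N:ℚ) * b i' ≤ ∑ i ∈ J, dotp (A i') (xf i) := by
      rw [hN]
      have := Finset.card_nsmul_le_sum J (fun i => dotp (A i') (xf i)) (b i')
        (fun i _ => hxfP i i')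
      rwa [nsmul_eq_mul] at this
    have h0 := hx₀ i'
    rw [le_inv_mul_iff₀ hdenpos]
    linarith
  have hstrict : ∀ i' ∈ J, b i' < dotp (A i') p := by
    intro i' hi'
    rw [hdot]
    have hsum : (N:ℚ) * b i' < ∑ i ∈ J, dotp (A i') (xf i) := by
      have hlt : ∑ i ∈ J, b i' < ∑ i ∈ J, dotp (A i') (xf i) := by
        apply Finset.sum_lt_sum (fun i _ => hxfP i i') ⟨i', hi', hxfstrict i' hi'⟩
      rw [Finset.sum_const, nsmul_eq_mul] at hlt
      rw [hN]
      exact hlt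
    have h0 := hx₀ i'
    rw [lt_inv_mul_iff₀ hdenpos]
    linarith
  have hflat : ∀ i', i' ∉ J → dotp (A i') p = b i' := fun i' hi' => heq i' hi' p hpmem
  refine ⟨p, hpmem, ?_⟩
  intro y hy
  obtain ⟨ε, hε, hεh⟩ := exists_pos_eps
    (fun i => if i ∈ J then dotp (A i) p - b i else 1)
    (fun i => if i ∈ J then dotp (A i) p - dotp (A i) y else 0)
    (fun i => by
      show (0:ℚ) < if i ∈ J then dotp (A i) p - b i else 1
      by_cases hi : i ∈ J
      · rw [if_pos hi]; linarith [hstrict i hi]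
      · rw [if_neg hi]; norm_num)
  refine ⟨ε, hε, ?_⟩
  intro i
  rw [dotp_move]
  by_cases hi : i ∈ J
  · have h2 := hεh i
    rw [if_pos hi, if_pos hi] at h2
    linarith
  · rw [hflat i hi, heq i hi y hy]
    linarith

lemma dotp_neg_left {ι : Type*} [Fintype ι] (u x : ι → ℚ) : dotp (-u) x = -dotp u x := by
  simp [dotp, neg_mul]

lemma poly_inter_halfspace {ι : Type} [Fintype ι] {P : Set (ι → ℚ)} (h : IsPolyhedron P)
    (u : ι → ℚ) (c : ℚ) : IsPolyhedron {x | x ∈ P ∧ dotp u x ≤ c} := by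
  obtain ⟨r, A, b, rfl⟩ := h
  have hset : {x : ι → ℚ | x ∈ {x | ∀ i, b i ≤ dotp (A i) x} ∧ dotp u x ≤ c}
      = {x | ∀ l : Fin r ⊕ Unit,
          Sum.elim b (fun _ => -c) l ≤ dotp (Sum.elim A (fun _ => -u) l) x} := by
    ext x
    constructor
    · rintro ⟨h1, h2⟩ l
      rcases l with i | _
      · exact h1 i
      · show -c ≤ dotp (-u) x
        rw [dotp_neg_left]
        linarith
    · intro h
      refine ⟨fun i => h (Sum.inl i), ?_⟩
      have := h (Sum.inr ())
      rw [Sum.elim_inr, Sum.elim_inr, dotp_neg_left] at this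
      linarith
  rw [hset]
  exact isPolyhedron_of_index _ _

lemma poly_slice {m d : ℕ} {C : Set ((Fin m ⊕ Fin d) → ℚ)} (hC : IsPolyhedron C)
    (v : Fin d → ℚ) : IsPolyhedron {p | p ∈ C ∧ p ∘ Sum.inr = v} := by
  classical
  obtain ⟨r, A, b, rfl⟩ := hC
  set δ : Fin d → (Fin m ⊕ Fin d) → ℚ :=
    fun j => fun e => if e = Sum.inr j then (1:ℚ) else 0 with hδdef
  have hδ : ∀ j p, dotp (δ j) p = p (Sum.inr j) := fun j p => dotp_delta _ p
  have hδ' : ∀ j (p : (Fin m ⊕ Fin d) → ℚ), dotp (-δ j) p = -(p (Sum.inr j)) := by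
    intro j p
    rw [dotp_neg_left, hδ]
  have hset : {p : (Fin m ⊕ Fin d) → ℚ | p ∈ {x | ∀ i, b i ≤ dotp (A i) x} ∧ p ∘ Sum.inr = v}
      = {p | ∀ l : Fin r ⊕ (Fin d ⊕ Fin d),
          Sum.elim b (Sum.elim v (fun j => -(v j))) l
            ≤ dotp (Sum.elim A (Sum.elim δ (fun j => -δ j)) l) p} := by
    ext p
    constructor
    · rintro ⟨h1, h2⟩ l
      rcases l with i | (j | j)
      · exact h1 i
      · simp only [Sum.elim_inl, Sum.elim_inr]
        rw [hδ]
        exact le_of_eq (congrFun h2 j).symm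
      · simp only [Sum.elim_inl, Sum.elim_inr]
        rw [hδ']
        exact le_of_eq (congr_arg Neg.neg (congrFun h2 j)).symm
    · intro h
      refine ⟨fun i => h (Sum.inl i), funext fun j => ?_⟩
      have h1 := h (Sum.inr (Sum.inl j))
      have h2 := h (Sum.inr (Sum.inr j))
      simp only [Sum.elim_inl, Sum.elim_inr] at h1 h2
      rw [hδ] at h1
      rw [hδ'] at h2
      show p (Sum.inr j) = v j
      linarith
  rw [hset]
  exact isPolyhedron_of_index _ _


/-- `F = tilde-face_w(C_v)` iff `v ∈ π(relint F)` and
`w ∈ π^∨(relint N_C(F))`. -/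
theorem smallest_face_iff (m d : ℕ) (C : Set ((Fin m ⊕ Fin d) → ℚ))
    (hC : IsPolyhedralCone C) (hfull : Submodule.span ℚ C = ⊤)
    (F : Set ((Fin m ⊕ Fin d) → ℚ)) (hF : IsFaceOf C F)
    (v : Fin d → ℚ) (w : Fin m → ℚ)
    (hv : v ∈ (fun x : (Fin m ⊕ Fin d) → ℚ => x ∘ Sum.inr) '' C)
    (hw : w ∈ (fun u : (Fin m ⊕ Fin d) → ℚ => u ∘ Sum.inl) '' dualCone C) :
    IsSmallestFaceContaining C
        {p : (Fin m ⊕ Fin d) → ℚ |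
          p ∘ Sum.inl ∈ faceOf {x' : Fin m → ℚ | Sum.elim x' v ∈ C} w ∧ p ∘ Sum.inr = v} F
      ↔ (v ∈ (fun x : (Fin m ⊕ Fin d) → ℚ => x ∘ Sum.inr) '' relint F ∧
          w ∈ (fun u : (Fin m ⊕ Fin d) → ℚ => u ∘ Sum.inl) '' relint (normalCone C F)) := by
  classical
  obtain ⟨r, A, hCeq⟩ := hC
  have hC0 : (0 : (Fin m ⊕ Fin d) → ℚ) ∈ C := by
    rw [hCeq]
    intro i
    rw [dotp_zero_right]
  have hCs : ∀ x ∈ C, ∀ lam : ℚ, 0 < lam → lam • x ∈ C := by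
    intro x hx lam hlam
    rw [hCeq] at hx ⊢
    intro i
    rw [dotp_smul_right]
    exact mul_nonneg hlam.le (hx i)
  have hCrow : ∀ x ∈ C, ∀ i, 0 ≤ dotp (A i) x := by
    intro x hx
    rwa [hCeq] at hx
  set S : Set ((Fin m ⊕ Fin d) → ℚ) :=
    {p : (Fin m ⊕ Fin d) → ℚ |
      p ∘ Sum.inl ∈ faceOf {x' : Fin m → ℚ | Sum.elim x' v ∈ C} w ∧ p ∘ Sum.inr = v}
    with hSdef
  set wh : (Fin m ⊕ Fin d) → ℚ := Sum.elim w 0 with hwhdef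
  set P : Set ((Fin m ⊕ Fin d) → ℚ) := {p | p ∈ C ∧ p ∘ Sum.inr = v} with hPdef
  have helim : ∀ p : (Fin m ⊕ Fin d) → ℚ, p ∘ Sum.inr = v → Sum.elim (p ∘ Sum.inl) v = p := by
    intro p hp
    funext e
    rcases e with i | j
    · rfl
    · show v j = p (Sum.inr j)
      rw [← hp]
      rfl
  have hwhdot : ∀ p, dotp wh p = dotp w (p ∘ Sum.inl) := by
    intro p
    rw [hwhdef, dotp_split, Sum.elim_comp_inl, Sum.elim_comp_inr, dotp_zero_left, add_zero]
  have hSface : S = {p | p ∈ P ∧ ∀ q ∈ P, dotp wh p ≤ dotp wh q} := by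
    ext p
    constructor
    · rintro ⟨h1, h2⟩
      have hpC : p ∈ C := by
        have := h1.1
        rw [Set.mem_setOf_eq, helim p h2] at this
        exact this
      refine ⟨⟨hpC, h2⟩, ?_⟩
      intro q hq
      rw [hwhdot, hwhdot]
      have hq' : q ∘ Sum.inl ∈ {x' : Fin m → ℚ | Sum.elim x' v ∈ C} := by
        show Sum.elim (q ∘ Sum.inl) v ∈ C
        rw [helim q hq.2]
        exact hq.1
      exact h1.2 _ hq'
    · rintro ⟨⟨hpC, hpv⟩, hmin⟩
      refine ⟨⟨?_, ?_⟩, hpv⟩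
      · show Sum.elim (p ∘ Sum.inl) v ∈ C
        rw [helim p hpv]
        exact hpC
      · intro y' hy'
        have hyP : Sum.elim y' v ∈ P := ⟨hy', Sum.elim_comp_inr _ _⟩
        have := hmin _ hyP
        rw [hwhdot, hwhdot, Sum.elim_comp_inl] at this
        exact this
  constructor
  · -- forward direction
    intro hsmall
    obtain ⟨hFface, hSF, hFmin⟩ := hsmall
    obtain ⟨uw, huwdual, huwinl⟩ := hw
    obtain ⟨xv, hxvC, hxvπ⟩ := hv
    have hPne : P.Nonempty := ⟨xv, hxvC, hxvπ⟩
    have hCpoly : IsPolyhedron C := ⟨r, A, fun _ => (0:ℚ), by rw [hCeq]⟩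
    have hPpoly : IsPolyhedron P := poly_slice hCpoly v
    have hbd : ∀ p ∈ P, -(dotp (uw ∘ Sum.inr) v) ≤ dotp wh p := by
      intro p hp
      rw [hwhdot]
      have hsplit := dotp_split uw p
      rw [show uw ∘ Sum.inl = w from huwinl, hp.2] at hsplit
      have := huwdual p hp.1
      linarith
    obtain ⟨p₀, hp₀P, hp₀min⟩ := lp_min hPpoly hPne wh _ hbd
    have hSchar : S = {p | p ∈ P ∧ dotp wh p ≤ dotp wh p₀} := by
      rw [hSface]
      ext p
      constructor
      · rintro ⟨h1, h2⟩
        exact ⟨h1, h2 p₀ hp₀P⟩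
      · rintro ⟨h1, h2⟩
        exact ⟨h1, fun q hq => le_trans h2 (hp₀min q hq)⟩
    have hSpoly : IsPolyhedron S := by
      rw [hSchar]
      exact poly_inter_halfspace hPpoly wh _
    have hSne : S.Nonempty := ⟨p₀, by rw [hSchar]; exact ⟨hp₀P, le_refl _⟩⟩
    obtain ⟨p, hprel⟩ := relint_nonempty hSpoly hSne
    have hpS : p ∈ S := hprel.1
    have hpP : p ∈ P := by
      have := hpS; rw [hSchar] at this; exact this.1
    have hpC : p ∈ C := hpP.1
    have hpπ : p ∘ Sum.inr = v := hpP.2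
    have hpmin : ∀ q ∈ P, dotp wh p ≤ dotp wh q := by
      have := hpS; rw [hSface] at this; exact this.2
    set I : Finset (Fin r) := Finset.univ.filter (fun k => dotp (A k) p = 0) with hIdef
    set Fp : Set ((Fin m ⊕ Fin d) → ℚ) := {x | x ∈ C ∧ ∀ k ∈ I, dotp (A k) x = 0} with hFpdef
    set tp : (Fin m ⊕ Fin d) → ℚ := ∑ k ∈ I, A k with htpdef
    have htpdot : ∀ x, dotp tp x = ∑ k ∈ I, dotp (A k) x := fun x => dotp_sum_left I A x
    have htpdual : ∀ x ∈ C, 0 ≤ dotp tp x := by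
      intro x hx
      rw [htpdot]
      exact Finset.sum_nonneg (fun k _ => hCrow x hx k)
    have hFpzero : Fp = faceOf C tp := by
      rw [face_eq_zero_set hC0 htpdual]
      ext x
      constructor
      · rintro ⟨hxC, hxk⟩
        exact ⟨hxC, by rw [htpdot]; exact Finset.sum_eq_zero hxk⟩
      · rintro ⟨hxC, hx0⟩
        refine ⟨hxC, ?_⟩
        rw [htpdot] at hx0
        exact (Finset.sum_eq_zero_iff_of_nonneg (fun k _ => hCrow x hxC k)).mp hx0
    have hpFp : p ∈ Fp := ⟨hpC, fun k hk => (Finset.mem_filter.mp hk).2⟩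
    have hFpface : IsFaceOf C Fp := ⟨⟨p, hpFp⟩, tp, hFpzero⟩
    have hFpsub : Fp ⊆ C := fun x hx => hx.1
    have hspos : ∀ k, (0:ℚ) < if k ∈ I then 1 else dotp (A k) p := by
      intro k
      by_cases hk : k ∈ I
      · rw [if_pos hk]; norm_num
      · rw [if_neg hk]
        refine lt_of_le_of_ne (hCrow p hpC k) (Ne.symm ?_)
        exact fun hc => hk (Finset.mem_filter.mpr ⟨Finset.mem_univ k, hc⟩)
    have hprelFp : p ∈ relint Fp := by
      refine ⟨hpFp, ?_⟩
      intro y hy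
      obtain ⟨ε, hε, hεh⟩ := exists_pos_eps
        (fun k => if k ∈ I then 1 else dotp (A k) p)
        (fun k => if k ∈ I then 0 else dotp (A k) p - dotp (A k) y)
        hspos
      refine ⟨ε, hε, ⟨?_, ?_⟩⟩
      · rw [hCeq]
        intro k
        rw [dotp_move]
        by_cases hk : k ∈ I
        · rw [(Finset.mem_filter.mp hk).2, hy.2 k hk]
          norm_num
        · have h2 := hεh k
          rw [if_neg hk, if_neg hk] at h2
          linarith
      · intro k hk
        rw [dotp_move, (Finset.mem_filter.mp hk).2, hy.2 k hk]
        ring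
    have hSFp : S ⊆ Fp := by
      intro q hq
      have hqP : q ∈ P := by
        have := hq; rw [hSface] at this; exact this.1
      refine ⟨hqP.1, ?_⟩
      intro k hk
      obtain ⟨ε, hε, hmem⟩ := hprel.2 q hq
      have hmemP : p + ε • (p - q) ∈ P := by
        have h := hmem
        rw [hSface] at h
        exact h.1
      have h2 := hCrow _ hmemP.1 k
      rw [dotp_move] at h2
      rw [(Finset.mem_filter.mp hk).2] at h2
      have h3 := hCrow q hqP.1 k
      nlinarith
    have hFeqFp : F = Fp := by
      refine Set.Subset.antisymm (hFmin Fp hFpface hSFp) ?_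
      obtain ⟨hFne, uF, hFeq⟩ := hFface
      have hpF : p ∈ F := hSF hpS
      have hpFface : p ∈ faceOf C uF := hFeq ▸ hpF
      have huF := face_char hC0 hCs ⟨p, hpFface⟩
      have hpuF : dotp uF p = 0 := by
        rw [huF.2] at hpFface
        exact hpFface.2
      intro x hx
      rw [hFeq, huF.2]
      exact ⟨hx.1, vanish_on_relint hFpsub huF.1 hprelFp hpuF x hx⟩
    -- auxiliary notation for the projected rows
    set a : Fin r → Fin m → ℚ := fun k => A k ∘ Sum.inl with hadef
    have hadot : ∀ (k : Fin r) (z : Fin m → ℚ), dotp (A k) (Sum.elim z 0) = dotp (a k) z := by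
      intro k z
      rw [dotp_split, Sum.elim_comp_inl, Sum.elim_comp_inr, dotp_zero_right, add_zero, hadef]
    have hmove2 : ∀ (z : Fin m → ℚ) (ε : ℚ) (k : Fin r),
        dotp (A k) (p + ε • Sum.elim z 0) = dotp (A k) p + ε * dotp (a k) z := by
      intro z ε k
      rw [dotp_add_right, dotp_smul_right, hadot]
    have hπmove : ∀ (z : Fin m → ℚ) (ε : ℚ), (p + ε • Sum.elim z 0) ∘ Sum.inr = v := by
      intro z ε
      funext j
      have hpj := congrFun hpπ j
      simp only [Function.comp_apply, Pi.add_apply, Pi.smul_apply, Sum.elim_inr,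
        Pi.zero_apply, smul_eq_mul, mul_zero, add_zero]
      exact hpj
    have hwhval : ∀ (z : Fin m → ℚ) (ε : ℚ),
        dotp wh (p + ε • Sum.elim z 0) = dotp wh p + ε * dotp w z := by
      intro z ε
      rw [dotp_add_right, dotp_smul_right, hwhdot (Sum.elim z 0), Sum.elim_comp_inl]
    have hmoveC : ∀ z : Fin m → ℚ, (∀ k ∈ I, 0 ≤ dotp (a k) z) →
        ∃ ε : ℚ, 0 < ε ∧ (p + ε • Sum.elim z 0) ∈ P := by
      intro z hz
      obtain ⟨ε, hε, hεh⟩ := exists_pos_eps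
        (fun k => if k ∈ I then 1 else dotp (A k) p)
        (fun k => if k ∈ I then 0 else dotp (a k) z)
        hspos
      refine ⟨ε, hε, ⟨?_, hπmove z ε⟩⟩
      rw [hCeq]
      intro k
      rw [hmove2]
      by_cases hk : k ∈ I
      · rw [(Finset.mem_filter.mp hk).2]
        have := mul_nonneg hε.le (hz k hk)
        linarith
      · have h2 := hεh k
        rw [if_neg hk, if_neg hk] at h2
        linarith
    -- base: w is a nonnegative combination of the tight projected rows
    have hbase : ∃ ν : {k // k ∈ I} → ℚ, (∀ kk, 0 ≤ ν kk) ∧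
        w = fun i => ∑ kk, ν kk * a kk.1 i := by
      by_contra hc
      obtain ⟨z, hz1, hz2⟩ := farkas (fun kk : {k // k ∈ I} => a kk.1) w hc
      obtain ⟨ε, hε, hqP⟩ := hmoveC z (fun k hk => hz1 ⟨k, hk⟩)
      have hle := hpmin _ hqP
      rw [hwhval z ε] at hle
      nlinarith [mul_neg_of_pos_of_neg hε hz2]
    obtain ⟨νbar, hνbar, hwbase⟩ := hbase
    have hwz_nonneg : ∀ z : Fin m → ℚ,
        (∀ kk : {k // k ∈ I}, 0 ≤ dotp (a kk.1) z) → 0 ≤ dotp w z := by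
      intro z hz
      rw [hwbase, dotp_comb]
      exact Finset.sum_nonneg (fun kk _ => mul_nonneg (hνbar kk) (hz kk))
    -- strict complementarity, per tight row
    have hstrict : ∀ j : {k // k ∈ I}, ∃ ν : {k // k ∈ I} → ℚ,
        (∀ kk, 0 ≤ ν kk) ∧ (w = fun i => ∑ kk, ν kk * a kk.1 i) ∧ 0 < ν j := by
      intro j
      by_contra hc
      push_neg at hc
      have hnone : ∀ ε : ℚ, 0 < ε → ¬ ∃ ν : {k // k ∈ I} → ℚ, (∀ kk, 0 ≤ ν kk) ∧
          (w - ε • a j.1) = fun i => ∑ kk, ν kk * a kk.1 i := by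
        rintro ε hε ⟨ν, hν, hexp⟩
        set ν' : {k // k ∈ I} → ℚ := fun kk => ν kk + if kk = j then ε else 0 with hν'def
        have h1 : ∀ kk, 0 ≤ ν' kk := by
          intro kk
          show 0 ≤ ν kk + if kk = j then ε else 0
          by_cases h : kk = j
          · rw [if_pos h]; linarith [hν kk]
          · rw [if_neg h]; simpa using hν kk
        have h2 : w = fun i => ∑ kk, ν' kk * a kk.1 i := by
          funext i
          have he := congrFun hexp i
          have hwi : w i - ε * a j.1 i = ∑ kk, ν kk * a kk.1 i := by
            simpa [Pi.sub_apply, Pi.smul_apply, smul_eq_mul] using he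
          have hsum : ∑ kk, ν' kk * a kk.1 i = (∑ kk, ν kk * a kk.1 i) + ε * a j.1 i := by
            show ∑ kk, (ν kk + if kk = j then ε else 0) * a kk.1 i = _
            simp only [add_mul, ite_mul, zero_mul, Finset.sum_add_distrib]
            congr 1
            have : ∀ kk : {k // k ∈ I}, (if kk = j then ε * a kk.1 i else 0)
                = (if j = kk then ε * a kk.1 i else 0) := by
              intro kk
              by_cases h : kk = j
              · rw [if_pos h, if_pos h.symm]
              · rw [if_neg h, if_neg (fun hh => h hh.symm)]
            rw [Finset.sum_congr rfl (fun kk _ => this kk), Finset.sum_ite_eq]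
            simp
          show w i = ∑ kk, ν' kk * a kk.1 i
          rw [hsum, ← hwi]
          ring
        have h3 := hc ν' h1 h2
        have h4 : 0 < ν' j := by
          show 0 < ν j + if j = j then ε else 0
          rw [if_pos rfl]
          linarith [hν j]
        linarith
      set Zrows : ({k // k ∈ I} ⊕ Bool) → (Fin m → ℚ) :=
        Sum.elim (fun kk => a kk.1) (fun s => if s then a j.1 else -a j.1) with hZrows
      set Zb : ({k // k ∈ I} ⊕ Bool) → ℚ :=
        Sum.elim (fun _ => 0) (fun s => if s then 1 else -1) with hZb
      set Z : Set (Fin m → ℚ) := {z | ∀ l, Zb l ≤ dotp (Zrows l) z} with hZdef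
      have hZchar : ∀ z, z ∈ Z ↔
          ((∀ kk : {k // k ∈ I}, 0 ≤ dotp (a kk.1) z) ∧ dotp (a j.1) z = 1) := by
        intro z
        constructor
        · intro hz
          constructor
          · intro kk
            have := hz (Sum.inl kk)
            simpa [hZrows, hZb] using this
          · have h1 := hz (Sum.inr true)
            have h2 := hz (Sum.inr false)
            simp only [hZrows, hZb, Sum.elim_inr, if_true, Bool.false_eq_true, if_false] at h1 h2
            rw [dotp_neg_left] at h2
            linarith
        · rintro ⟨h1, h2⟩ l
          rcases l with kk | s
          · simpa [hZrows, hZb] using h1 kk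
          · rcases s with _ | _ <;>
              simp only [hZrows, hZb, Sum.elim_inr, if_true, Bool.false_eq_true, if_false]
            · rw [dotp_neg_left]
              linarith
            · linarith
      have hZpoly : IsPolyhedron Z := isPolyhedron_of_index Zrows Zb
      have hZne : Z.Nonempty := by
        obtain ⟨z₁, hz₁1, hz₁2⟩ :=
          farkas (fun kk : {k // k ∈ I} => a kk.1) (w - (1:ℚ) • a j.1) (hnone 1 one_pos)
        have hd : dotp (w - (1:ℚ) • a j.1) z₁ = dotp w z₁ - dotp (a j.1) z₁ := by
          rw [dotp_sub_left, dotp_smul_left]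
          ring
        have hw0 := hwz_nonneg z₁ hz₁1
        have hajpos : 0 < dotp (a j.1) z₁ := by
          rw [hd] at hz₁2
          linarith
        refine ⟨(dotp (a j.1) z₁)⁻¹ • z₁, (hZchar _).mpr ⟨?_, ?_⟩⟩
        · intro kk
          rw [dotp_smul_right]
          exact mul_nonneg (inv_nonneg.mpr hajpos.le) (hz₁1 kk)
        · rw [dotp_smul_right, inv_mul_cancel₀ (ne_of_gt hajpos)]
      have hZbd : ∀ z ∈ Z, (0:ℚ) ≤ dotp w z := fun z hz => hwz_nonneg z ((hZchar z).mp hz).1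
      obtain ⟨zs, hzsZ, hzsmin⟩ := lp_min hZpoly hZne w 0 hZbd
      have hzs0 : dotp w zs = 0 := by
        refine le_antisymm ?_ (hZbd zs hzsZ)
        by_contra hpos
        push_neg at hpos
        obtain ⟨z₂, hz₂1, hz₂2⟩ := farkas (fun kk : {k // k ∈ I} => a kk.1)
          (w - (dotp w zs) • a j.1) (hnone _ hpos)
        have hd : dotp (w - (dotp w zs) • a j.1) z₂
            = dotp w z₂ - dotp w zs * dotp (a j.1) z₂ := by
          rw [dotp_sub_left, dotp_smul_left]
        rw [hd] at hz₂2
        have hw0 := hwz_nonneg z₂ hz₂1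
        have hajpos : 0 < dotp (a j.1) z₂ := by nlinarith
        have hz₂'Z : (dotp (a j.1) z₂)⁻¹ • z₂ ∈ Z := (hZchar _).mpr
          ⟨fun kk => by
            rw [dotp_smul_right]
            exact mul_nonneg (inv_nonneg.mpr hajpos.le) (hz₂1 kk),
          by rw [dotp_smul_right, inv_mul_cancel₀ (ne_of_gt hajpos)]⟩
        have hge := hzsmin _ hz₂'Z
        rw [dotp_smul_right] at hge
        have hlt : (dotp (a j.1) z₂)⁻¹ * dotp w z₂ < dotp w zs := by
          rw [inv_mul_lt_iff₀ hajpos]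
          nlinarith
        linarith
      have hzsfacts := (hZchar zs).mp hzsZ
      obtain ⟨ε, hε, hqP⟩ := hmoveC zs (fun k hk => hzsfacts.1 ⟨k, hk⟩)
      have hqval : dotp wh (p + ε • Sum.elim zs 0) = dotp wh p := by
        rw [hwhval, hzs0]
        ring
      have hqS : p + ε • Sum.elim zs 0 ∈ S := by
        rw [hSface]
        exact ⟨hqP, fun q' hq' => by rw [hqval]; exact hpmin q' hq'⟩
      have hqFp : p + ε • Sum.elim zs 0 ∈ Fp := hSFp hqS
      have hjq : dotp (A j.1) (p + ε • Sum.elim zs 0) = 0 := hqFp.2 j.1 j.2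
      rw [hmove2, (Finset.mem_filter.mp j.2).2, hzsfacts.2] at hjq
      simp at hjq
      exact absurd hjq (ne_of_gt hε)
    choose νs hνs1 hνs2 hνs3 using hstrict
    set lift : ({k // k ∈ I} → ℚ) → (Fin r → ℚ) :=
      fun ν k => ∑ kk : {k' // k' ∈ I}, if kk.1 = k then ν kk else 0 with hliftdef
    have hliftsum : ∀ (ν : {k // k ∈ I} → ℚ) (f : Fin r → ℚ),
        ∑ k, lift ν k * f k = ∑ kk, ν kk * f kk.1 := by
      intro ν f
      show ∑ k, (∑ kk : {k' // k' ∈ I}, if kk.1 = k then ν kk else 0) * f k = _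
      simp only [Finset.sum_mul]
      rw [Finset.sum_comm]
      refine Finset.sum_congr rfl (fun kk _ => ?_)
      have hterm : ∀ k : Fin r, (if kk.1 = k then ν kk else 0) * f k
          = if kk.1 = k then ν kk * f k else 0 := by
        intro k
        by_cases h : kk.1 = k
        · rw [if_pos h, if_pos h]
        · rw [if_neg h, if_neg h, zero_mul]
      rw [Finset.sum_congr rfl (fun k _ => hterm k), Finset.sum_ite_eq]
      simp
    have hliftnn : ∀ ν : {k // k ∈ I} → ℚ, (∀ kk, 0 ≤ ν kk) → ∀ k, 0 ≤ lift ν k := by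
      intro ν hν k
      apply Finset.sum_nonneg
      intro kk _
      by_cases h : kk.1 = k
      · rw [if_pos h]; exact hν kk
      · rw [if_neg h]
    have hliftzero : ∀ ν : {k // k ∈ I} → ℚ, ∀ k, k ∉ I → lift ν k = 0 := by
      intro ν k hk
      apply Finset.sum_eq_zero
      intro kk _
      rw [if_neg]
      intro hcc
      exact hk (hcc ▸ kk.2)
    have hliftpos : ∀ (ν : {k // k ∈ I} → ℚ), (∀ kk, 0 ≤ ν kk) →
        ∀ k (hk : k ∈ I), 0 < ν ⟨k, hk⟩ → 0 < lift ν k := by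
      intro ν hν k hk hpos
      refine Finset.sum_pos' (fun kk _ => ?_) ⟨⟨k, hk⟩, Finset.mem_univ _, ?_⟩
      · by_cases h : kk.1 = k
        · rw [if_pos h]; exact hν kk
        · rw [if_neg h]
      · rw [if_pos rfl]
        exact hpos
    set Nc : ℕ := Fintype.card {k // k ∈ I} with hNcdef
    set νtot : {k // k ∈ I} → ℚ := fun kk => νbar kk + ∑ jj, νs jj kk with hνtotdef
    set μ : Fin r → ℚ := fun k => ((Nc:ℚ) + 1)⁻¹ * lift νtot k with hμdef
    have hdeninv : (0:ℚ) < (Nc:ℚ) + 1 := by positivity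
    have hνtotnn : ∀ kk, 0 ≤ νtot kk :=
      fun kk => add_nonneg (hνbar kk) (Finset.sum_nonneg fun jj _ => hνs1 jj kk)
    have hμnn : ∀ k, 0 ≤ μ k :=
      fun k => mul_nonneg (inv_nonneg.mpr hdeninv.le) (hliftnn νtot hνtotnn k)
    have hμpos : ∀ k, k ∈ I → 0 < μ k := by
      intro k hk
      apply mul_pos (inv_pos.mpr hdeninv)
      apply hliftpos νtot hνtotnn k hk
      have hterm : 0 < ∑ jj, νs jj ⟨k, hk⟩ :=
        Finset.sum_pos' (fun jj _ => hνs1 jj ⟨k, hk⟩)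
          ⟨⟨k, hk⟩, Finset.mem_univ _, hνs3 ⟨k, hk⟩⟩
      have := hνbar ⟨k, hk⟩
      show 0 < νbar ⟨k, hk⟩ + ∑ jj, νs jj ⟨k, hk⟩
      linarith
    have hμzero : ∀ k, k ∉ I → μ k = 0 := by
      intro k hk
      show ((Nc:ℚ) + 1)⁻¹ * lift νtot k = 0
      rw [hliftzero νtot k hk, mul_zero]
    have hwsum : w = fun i => ∑ k, μ k * a k i := by
      funext i
      show w i = ∑ k, ((Nc:ℚ) + 1)⁻¹ * lift νtot k * a k i
      have h1 : ∑ k, ((Nc:ℚ) + 1)⁻¹ * lift νtot k * a k i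
          = ((Nc:ℚ) + 1)⁻¹ * ∑ k, lift νtot k * a k i := by
        rw [Finset.mul_sum]
        exact Finset.sum_congr rfl (fun k _ => by ring)
      rw [h1, hliftsum]
      have h2 : ∑ kk, νtot kk * a kk.1 i
          = (∑ kk, νbar kk * a kk.1 i) + ∑ jj, (∑ kk, νs jj kk * a kk.1 i) := by
        show ∑ kk, (νbar kk + ∑ jj, νs jj kk) * a kk.1 i = _
        simp only [add_mul, Finset.sum_add_distrib, Finset.sum_mul]
        congr 1
        exact Finset.sum_comm
      have h3 : ∀ jj : {k // k ∈ I}, (∑ kk, νs jj kk * a kk.1 i) = w i :=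
        fun jj => (congrFun (hνs2 jj) i).symm
      rw [h2, ← congrFun hwbase i, Finset.sum_congr rfl (fun jj _ => h3 jj),
        Finset.sum_const, nsmul_eq_mul, Finset.card_univ, ← hNcdef]
      field_simp
      ring
    set u : (Fin m ⊕ Fin d) → ℚ := fun e => ∑ k, μ k * A k e with hudef
    have huinl : u ∘ Sum.inl = w := by
      funext i
      show ∑ k, μ k * A k (Sum.inl i) = w i
      exact (congrFun hwsum i).symm
    have hudual : ∀ x ∈ C, 0 ≤ dotp u x := by
      intro x hx
      rw [hudef, dotp_comb]
      exact Finset.sum_nonneg (fun k _ => mul_nonneg (hμnn k) (hCrow x hx k))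
    have huface : faceOf C u = F := by
      rw [face_eq_zero_set hC0 hudual, hFeqFp]
      ext x
      constructor
      · rintro ⟨hxC, hx0⟩
        refine ⟨hxC, ?_⟩
        intro k hk
        have hcomb : dotp u x = ∑ k, μ k * dotp (A k) x := by
          rw [hudef, dotp_comb]
        rw [hcomb] at hx0
        have := (Finset.sum_eq_zero_iff_of_nonneg
          (fun k' _ => mul_nonneg (hμnn k') (hCrow x hxC k'))).mp hx0 k (Finset.mem_univ k)
        rcases mul_eq_zero.mp this with h | h
        · exact absurd h (ne_of_gt (hμpos k hk))
        · exact h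
      · rintro ⟨hxC, hxk⟩
        refine ⟨hxC, ?_⟩
        have hcomb : dotp u x = ∑ k, μ k * dotp (A k) x := by
          rw [hudef, dotp_comb]
        rw [hcomb]
        apply Finset.sum_eq_zero
        intro k _
        by_cases hk : k ∈ I
        · rw [hxk k hk, mul_zero]
        · rw [hμzero k hk, zero_mul]
    refine ⟨⟨p, ?_, hpπ⟩, ⟨u, ⟨?_, ?_⟩, huinl⟩⟩
    · rw [hFeqFp]
      exact hprelFp
    · show F ⊆ faceOf C u
      rw [huface]
    · intro u' hu'
      have hpF : p ∈ F := hFeqFp ▸ hpFp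
      have hu'face := face_char hC0 hCs ⟨p, hu' hpF⟩
      have hu'p : dotp u' p = 0 := by
        have := hu' hpF
        rw [hu'face.2] at this
        exact this.2
      have hu'dec : ∃ μ' : Fin r → ℚ, (∀ k, 0 ≤ μ' k) ∧ u' = fun e => ∑ k, μ' k * A k e := by
        by_contra hc2
        obtain ⟨z, hz1, hz2⟩ := farkas A u' hc2
        have hzC : z ∈ C := by rw [hCeq]; exact hz1
        have := hu'face.1 z hzC
        linarith
      obtain ⟨μ', hμ'nn, hu'eq⟩ := hu'dec
      have hsupp' : ∀ k, μ' k ≠ 0 → k ∈ I := by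
        intro k hkne
        have hsum : ∑ k', μ' k' * dotp (A k') p = 0 := by
          rw [← dotp_comb, ← hu'eq]
          exact hu'p
        have := (Finset.sum_eq_zero_iff_of_nonneg
          (fun k' _ => mul_nonneg (hμ'nn k') (hCrow p hpC k'))).mp hsum k (Finset.mem_univ k)
        rcases mul_eq_zero.mp this with h | h
        · exact absurd h hkne
        · exact Finset.mem_filter.mpr ⟨Finset.mem_univ k, h⟩
      obtain ⟨ε, hε, hεh⟩ := exists_pos_eps
        (fun k => if k ∈ I then μ k else 1)
        (fun k => μ k - μ' k)
        (fun k => by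
          show (0:ℚ) < if k ∈ I then μ k else 1
          by_cases hk : k ∈ I
          · rw [if_pos hk]; exact hμpos k hk
          · rw [if_neg hk]; norm_num)
      refine ⟨ε, hε, ?_⟩
      have hcoefnn : ∀ k, 0 ≤ μ k + ε * (μ k - μ' k) := by
        intro k
        by_cases hk : k ∈ I
        · have := hεh k
          rw [if_pos hk] at this
          exact this
        · have hμ'0 : μ' k = 0 := by
            by_contra hne
            exact hk (hsupp' k hne)
          rw [hμzero k hk, hμ'0]
          simp
      have hcoef : u + ε • (u - u') = fun e => ∑ k, (μ k + ε * (μ k - μ' k)) * A k e := by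
        funext e
        simp only [Pi.add_apply, Pi.smul_apply, Pi.sub_apply, smul_eq_mul, hudef, hu'eq]
        rw [← Finset.sum_sub_distrib, Finset.mul_sum, ← Finset.sum_add_distrib]
        exact Finset.sum_congr rfl (fun k _ => by ring)
      have hu''dual : ∀ x ∈ C, 0 ≤ dotp (u + ε • (u - u')) x := by
        intro x hx
        rw [hcoef, dotp_comb]
        exact Finset.sum_nonneg (fun k _ => mul_nonneg (hcoefnn k) (hCrow x hx k))
      intro f hf
      rw [face_eq_zero_set hC0 hu''dual]
      refine ⟨(show f ∈ Fp from hFeqFp ▸ hf).1, ?_⟩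
      have h1 : dotp u f = 0 := by
        have hfu : f ∈ faceOf C u := by rw [huface]; exact hf
        rw [face_eq_zero_set hC0 hudual] at hfu
        exact hfu.2
      have h2 : dotp u' f = 0 := by
        have := hu' hf
        rw [hu'face.2] at this
        exact this.2
      rw [dotp_add_left, dotp_smul_left, dotp_sub_left, h1, h2]
      ring
  · -- backward direction
    rintro ⟨⟨x₀, hx₀relint, hx₀π⟩, ⟨u₀, hu₀relint, hu₀inl⟩⟩
    obtain ⟨hFne, u₁, hFu₁⟩ := hF
    have hFsub : F ⊆ C := by
      rw [hFu₁]
      exact fun x hx => hx.1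
    have hFaceNe : (faceOf C u₁).Nonempty := hFu₁ ▸ hFne
    have hu₁ := face_char hC0 hCs hFaceNe
    have hFzero : F = {x | x ∈ C ∧ dotp u₁ x = 0} := by rw [hFu₁, hu₁.2]
    have hx₀F : x₀ ∈ F := hx₀relint.1
    have hx₀C : x₀ ∈ C := hFsub hx₀F
    have hFu₀ : F ⊆ faceOf C u₀ := hu₀relint.1
    have hu₀face := face_char hC0 hCs ⟨x₀, hFu₀ hx₀F⟩
    have hu₀dual : ∀ x ∈ C, 0 ≤ dotp u₀ x := hu₀face.1
    have hu₀x₀ : dotp u₀ x₀ = 0 := by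
      have := hFu₀ hx₀F
      rw [hu₀face.2] at this
      exact this.2
    -- decompose u₁
    have hu₁dec : ∃ μ : Fin r → ℚ, (∀ k, 0 ≤ μ k) ∧ u₁ = fun e => ∑ k, μ k * A k e := by
      by_contra hc
      obtain ⟨z, hz1, hz2⟩ := farkas A u₁ hc
      have hzC : z ∈ C := by
        rw [hCeq]
        intro i
        exact hz1 i
      have := hu₁.1 z hzC
      linarith
    obtain ⟨μ₁, hμ₁, hu₁eq⟩ := hu₁dec
    set I₀ : Finset (Fin r) := Finset.univ.filter (fun k => dotp (A k) x₀ = 0) with hI₀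
    set t : (Fin m ⊕ Fin d) → ℚ := ∑ k ∈ I₀, A k with htdef
    have htdot : ∀ x, dotp t x = ∑ k ∈ I₀, dotp (A k) x := fun x => dotp_sum_left I₀ A x
    have htdual : ∀ x ∈ C, 0 ≤ dotp t x := by
      intro x hx
      rw [htdot]
      exact Finset.sum_nonneg (fun k _ => hCrow x hx k)
    have htzero : ∀ x ∈ C, dotp t x = 0 → ∀ k ∈ I₀, dotp (A k) x = 0 := by
      intro x hx h0 k hk
      rw [htdot] at h0
      exact (Finset.sum_eq_zero_iff_of_nonneg (fun k _ => hCrow x hx k)).mp h0 k hk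
    have hx₀u₁ : dotp u₁ x₀ = 0 := by
      have := hFzero ▸ hx₀F
      exact this.2
    have hFchar : F = {x | x ∈ C ∧ ∀ k ∈ I₀, dotp (A k) x = 0} := by
      ext x
      constructor
      · intro hxF
        refine ⟨hFsub hxF, ?_⟩
        intro k hk
        have hk0 : dotp (A k) x₀ = 0 := (Finset.mem_filter.mp hk).2
        exact vanish_on_relint hFsub (fun y hy => hCrow y hy k) hx₀relint hk0 x hxF
      · rintro ⟨hxC, hxk⟩
        rw [hFzero]
        refine ⟨hxC, ?_⟩
        have hsupp : ∀ k, μ₁ k ≠ 0 → dotp (A k) x₀ = 0 := by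
          intro k hkne
          have hsum : ∑ k', μ₁ k' * dotp (A k') x₀ = 0 := by
            rw [← dotp_comb, ← hu₁eq]
            exact hx₀u₁
          have := (Finset.sum_eq_zero_iff_of_nonneg
            (fun k' _ => mul_nonneg (hμ₁ k') (hCrow x₀ hx₀C k'))).mp hsum k (Finset.mem_univ k)
          rcases mul_eq_zero.mp this with h | h
          · exact absurd h hkne
          · exact h
        rw [hu₁eq, dotp_comb]
        apply Finset.sum_eq_zero
        intro k _
        by_cases hk : μ₁ k = 0
        · rw [hk, zero_mul]
        · rw [hxk k (Finset.mem_filter.mpr ⟨Finset.mem_univ k, hsupp k hk⟩), mul_zero]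
    have htN : t ∈ normalCone C F := by
      intro f hf
      rw [face_eq_zero_set hC0 htdual]
      refine ⟨hFsub hf, ?_⟩
      rw [htdot]
      apply Finset.sum_eq_zero
      intro k hk
      exact (hFchar ▸ hf).2 k hk
    have hfaceu₀ : faceOf C u₀ = F := by
      apply Set.Subset.antisymm ?_ hFu₀
      intro x hx
      rw [hu₀face.2] at hx
      obtain ⟨ε, hε, hmem⟩ := hu₀relint.2 t htN
      have hmem' : ∀ y ∈ C, 0 ≤ dotp (u₀ + ε • (u₀ - t)) y :=
        (face_char hC0 hCs ⟨x₀, hmem hx₀F⟩).1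
      have hval := hmem' x hx.1
      rw [dotp_add_left, dotp_smul_left, dotp_sub_left, hx.2] at hval
      have ht0 : dotp t x = 0 := by
        have := htdual x hx.1
        nlinarith
      rw [hFchar]
      exact ⟨hx.1, htzero x hx.1 ht0⟩
    have hx₀P : x₀ ∈ P := ⟨hx₀C, hx₀π⟩
    have hwhrel : ∀ p ∈ P, dotp wh p = dotp u₀ p - dotp (u₀ ∘ Sum.inr) v := by
      intro p hp
      have hsplit := dotp_split u₀ p
      rw [hwhdot p]
      rw [show u₀ ∘ Sum.inl = w from hu₀inl, hp.2] at hsplit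
      linarith
    have hSPF : ∀ p, p ∈ S ↔ (p ∈ P ∧ p ∈ F) := by
      intro p
      rw [hSface]
      constructor
      · rintro ⟨hpP, hmin⟩
        refine ⟨hpP, ?_⟩
        have h1 := hmin x₀ hx₀P
        rw [hwhrel p hpP, hwhrel x₀ hx₀P, hu₀x₀] at h1
        have h2 : dotp u₀ p = 0 := le_antisymm (by linarith) (hu₀dual p hpP.1)
        rw [← hfaceu₀, hu₀face.2]
        exact ⟨hpP.1, h2⟩
      · rintro ⟨hpP, hpF⟩
        refine ⟨hpP, ?_⟩
        intro q hq
        rw [hwhrel p hpP, hwhrel q hq]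
        have hp0 : dotp u₀ p = 0 := by
          have := hFu₀ hpF
          rw [hu₀face.2] at this
          exact this.2
        have := hu₀dual q hq.1
        linarith
    refine ⟨⟨hFne, u₁, hFu₁⟩, ?_, ?_⟩
    · intro p hp
      exact ((hSPF p).mp hp).2
    · intro G hG hSG
      have hx₀S : x₀ ∈ S := (hSPF x₀).mpr ⟨hx₀P, hx₀F⟩
      obtain ⟨hGne, uG, hGeq⟩ := hG
      have hx₀G' : x₀ ∈ faceOf C uG := hGeq ▸ (hSG hx₀S)
      have huG := face_char hC0 hCs ⟨x₀, hx₀G'⟩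
      have huGx₀ : dotp uG x₀ = 0 := by
        rw [huG.2] at hx₀G'
        exact hx₀G'.2
      intro y hyF
      rw [hGeq, huG.2]
      exact ⟨hFsub hyF, vanish_on_relint hFsub huG.1 hx₀relint huGx₀ y hyF⟩
end
end
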